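/- arXiv:1103.2316 — 6 statements merged into one kernel-verified Lean document; each statement's English description precedes it below -/
import Mathlib

section
/- Let {|s_i⟩} and {|t_j⟩} be two n-qubit stabilizer bases. Then there exists r ≥ 0 such that |⟨s_i|t_j⟩| ∈ {0, r} for all i and j. -/
/-!
STATEMENT 1: For any two n-qubit stabilizer bases {|s_i⟩}, {|t_j⟩} there exists r ≥ 0
such that |⟨s_i|t_j⟩| ∈ {0, r} for all i, j.
-/

noncomputable section

/-- The inner product ⟨u|v⟩ = Σ_x conj(u x) v x. -/
def qinner {d : Type*} [Fintype d] (u v : d → ℂ) : ℂ :=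
  ∑ x, (starRingEnd ℂ) (u x) * v x

/-- A family of vectors is orthonormal: ⟨v_i|v_j⟩ = δ_{ij}. -/
def OrthonormalFamily {ι d : Type*} [Fintype ι] [DecidableEq ι] [Fintype d]
    (v : ι → d → ℂ) : Prop :=
  ∀ i j, qinner (v i) (v j) = if i = j then 1 else 0

/-- The Pauli matrix σ_x. -/
def sx : Matrix (Fin 2) (Fin 2) ℂ := !![0, 1; 1, 0]

/-- The Pauli matrix σ_y. -/
def sy : Matrix (Fin 2) (Fin 2) ℂ := !![0, -Complex.I; Complex.I, 0]

/-- The Pauli matrix σ_z. -/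
def sz : Matrix (Fin 2) (Fin 2) ℂ := !![1, 0; 0, -1]

/-- `M` is an element of the n-qubit Pauli group: M = c·P₁⊗⋯⊗Pₙ with c ∈ {1,−1,i,−i}
and each Pⱼ ∈ {𝟙, σx, σy, σz}.  The n-qubit space is indexed by `Fin n → Fin 2`, and the
tensor product is written entrywise: (P₁⊗⋯⊗Pₙ)(x,y) = Π_j Pⱼ(x_j, y_j). -/
def IsPauli (n : ℕ) (M : Matrix (Fin n → Fin 2) (Fin n → Fin 2) ℂ) : Prop :=
  ∃ (c : ℂ) (P : Fin n → Matrix (Fin 2) (Fin 2) ℂ),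
    (c = 1 ∨ c = -1 ∨ c = Complex.I ∨ c = -Complex.I) ∧
    (∀ j, P j = 1 ∨ P j = sx ∨ P j = sy ∨ P j = sz) ∧
    M = c • Matrix.of fun x y => ∏ j, P j (x j) (y j)

/-- `S` is an n-qubit stabilizer group: an abelian subgroup of the n-qubit Pauli group
with exactly 2^n elements, not containing −𝟙. -/
def IsStabilizerGroup (n : ℕ)
    (S : Set (Matrix (Fin n → Fin 2) (Fin n → Fin 2) ℂ)) : Prop :=
  (∀ M ∈ S, IsPauli n M) ∧
  (1 : Matrix (Fin n → Fin 2) (Fin n → Fin 2) ℂ) ∈ S ∧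
  (∀ A ∈ S, ∀ B ∈ S, A * B ∈ S) ∧
  (∀ A ∈ S, ∀ B ∈ S, A * B = B * A) ∧
  S.ncard = 2 ^ n ∧
  (-1 : Matrix (Fin n → Fin 2) (Fin n → Fin 2) ℂ) ∉ S

/-- `v` is an orthonormal basis of ℂ^{2^n} consisting of common eigenvectors of all
elements of the stabilizer group `S`. -/
def IsBasisOfStabilizer (n : ℕ) (S : Set (Matrix (Fin n → Fin 2) (Fin n → Fin 2) ℂ))
    (v : (Fin n → Fin 2) → (Fin n → Fin 2) → ℂ) : Prop :=
  OrthonormalFamily v ∧ ∀ M ∈ S, ∀ i, ∃ μ : ℂ, M.mulVec (v i) = μ • v i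

/-- `v` is an n-qubit stabilizer basis. -/
def IsStabilizerBasis (n : ℕ) (v : (Fin n → Fin 2) → (Fin n → Fin 2) → ℂ) : Prop :=
  ∃ S, IsStabilizerGroup n S ∧ IsBasisOfStabilizer n S v

abbrev Mat (n : ℕ) := Matrix (Fin n → Fin 2) (Fin n → Fin 2) ℂ

def tens {n : ℕ} (P : Fin n → Matrix (Fin 2) (Fin 2) ℂ) : Mat n :=
  Matrix.of fun x y => ∏ j, P j (x j) (y j)

lemma tens_mul {n : ℕ} (P Q : Fin n → Matrix (Fin 2) (Fin 2) ℂ) :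
    tens P * tens Q = tens fun j => P j * Q j := by
  ext x y
  simp only [tens, Matrix.mul_apply, Matrix.of_apply]
  rw [Fintype.prod_sum (fun j a => P j (x j) a * Q j a (y j))]
  exact Finset.sum_congr rfl fun z _ => Finset.prod_mul_distrib.symm

lemma tens_one {n : ℕ} : tens (n := n) (fun _ => 1) = 1 := by
  ext x y
  simp only [tens, Matrix.of_apply, Matrix.one_apply]
  by_cases h : x = y
  · subst h; simp
  · rw [if_neg h]
    obtain ⟨j, hj⟩ : ∃ j, x j ≠ y j := by
      by_contra hc; push_neg at hc; exact h (funext hc)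
    exact Finset.prod_eq_zero (Finset.mem_univ j) (by simp [Matrix.one_apply, hj])

lemma tens_trace {n : ℕ} (P : Fin n → Matrix (Fin 2) (Fin 2) ℂ) :
    Matrix.trace (tens P) = ∏ j, Matrix.trace (P j) := by
  simp only [Matrix.trace, Matrix.diag, tens, Matrix.of_apply]
  rw [← Fintype.prod_sum (fun j a => P j a a)]

lemma pauli_mul_self {P : Matrix (Fin 2) (Fin 2) ℂ}
    (h : P = 1 ∨ P = sx ∨ P = sy ∨ P = sz) : P * P = 1 := by
  rcases h with h | h | h | h <;> subst h <;>
    simp [sx, sy, sz, Matrix.one_fin_two, Matrix.mul_fin_two, Complex.I_mul_I]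

lemma pauli_trace {P : Matrix (Fin 2) (Fin 2) ℂ}
    (h : P = 1 ∨ P = sx ∨ P = sy ∨ P = sz) : P = 1 ∨ Matrix.trace P = 0 := by
  rcases h with h | h | h | h <;> subst h
  · left; rfl
  all_goals right; simp [sx, sy, sz, Matrix.trace_fin_two_of]

lemma pauli_trace_mul {P Q : Matrix (Fin 2) (Fin 2) ℂ}
    (hP : P = 1 ∨ P = sx ∨ P = sy ∨ P = sz) (hQ : Q = 1 ∨ Q = sx ∨ Q = sy ∨ Q = sz) :
    P = Q ∨ Matrix.trace (P * Q) = 0 := by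
  rcases hP with h | h | h | h <;> rcases hQ with h' | h' | h' | h' <;> subst h <;> subst h' <;>
  first
  | exact Or.inl rfl
  | (right; simp [sx, sy, sz, Matrix.one_fin_two, Matrix.mul_fin_two, Matrix.trace_fin_two_of,
      Complex.I_mul_I]; try ring)

/-- Every element of a stabilizer group is an involution with real sign ±1. -/
lemma stab_struct {n : ℕ} {S : Set (Mat n)} (hS : IsStabilizerGroup n S)
    {M : Mat n} (hM : M ∈ S) :
    M * M = 1 ∧ ∃ (c : ℂ) (P : Fin n → Matrix (Fin 2) (Fin 2) ℂ),
      (c = 1 ∨ c = -1) ∧ (∀ j, P j = 1 ∨ P j = sx ∨ P j = sy ∨ P j = sz) ∧ M = c • tens P := by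
  obtain ⟨c, P, hc, hP, hMeq⟩ := hS.1 M hM
  have hMeq' : M = c • tens P := hMeq
  have hsq : M * M = (c * c) • (1 : Mat n) := by
    rw [hMeq', Matrix.smul_mul, Matrix.mul_smul, ← smul_smul, tens_mul]
    congr 1
    congr 1
    rw [show (fun j => P j * P j) = fun _ : Fin n => (1 : Matrix (Fin 2) (Fin 2) ℂ) from
      funext fun j => pauli_mul_self (hP j), tens_one]
  have hc2 : c * c = 1 ∨ c * c = -1 := by
    rcases hc with h | h | h | h <;> subst h <;> simp [Complex.I_mul_I]
  rcases hc2 with h1 | h1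
  · have hMM : M * M = 1 := by rw [hsq, h1, one_smul]
    refine ⟨hMM, c, P, ?_, hP, hMeq'⟩
    rcases hc with h | h | h | h <;> subst h
    · exact Or.inl rfl
    · exact Or.inr rfl
    · exfalso; rw [Complex.I_mul_I] at h1; exact (by norm_num : (-1 : ℂ) ≠ 1) h1
    · exfalso; rw [neg_mul_neg, Complex.I_mul_I] at h1
      exact (by norm_num : (-1 : ℂ) ≠ 1) h1
  · exfalso
    have : M * M ∈ S := hS.2.2.1 M hM M hM
    rw [hsq, h1] at this
    rw [show ((-1 : ℂ) • (1 : Mat n)) = (-1 : Mat n) by simp] at this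
    exact hS.2.2.2.2.2 this

/-- Elements of a stabilizer group other than 1 are traceless. -/
lemma stab_trace {n : ℕ} {S : Set (Mat n)} (hS : IsStabilizerGroup n S)
    {M : Mat n} (hM : M ∈ S) : M = 1 ∨ Matrix.trace M = 0 := by
  obtain ⟨-, c, P, hc, hP, hMeq⟩ := stab_struct hS hM
  by_cases h : ∀ j, P j = 1
  · have : tens P = 1 := by
      rw [show P = fun _ : Fin n => (1 : Matrix (Fin 2) (Fin 2) ℂ) from funext h, tens_one]
    rcases hc with h1 | h1 <;> subst h1
    · left; rw [hMeq, this, one_smul]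
    · exfalso
      apply hS.2.2.2.2.2
      rw [show (-1 : Mat n) = (-1 : ℂ) • tens P by rw [this]; simp, ← hMeq]
      exact hM
  · push_neg at h
    obtain ⟨j, hj⟩ := h
    right
    have : Matrix.trace (P j) = 0 := (pauli_trace (hP j)).resolve_left hj
    rw [hMeq, Matrix.trace_smul, tens_trace]
    rw [Finset.prod_eq_zero (Finset.mem_univ j) this, smul_zero]

/-- Cross traces vanish unless N = ±M. -/
lemma stab_trace_mul {n : ℕ} {S T : Set (Mat n)} (hS : IsStabilizerGroup n S)
    (hT : IsStabilizerGroup n T) {M N : Mat n} (hM : M ∈ S) (hN : N ∈ T)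
    (h1 : N ≠ M) (h2 : N ≠ -M) : Matrix.trace (M * N) = 0 := by
  obtain ⟨-, c, P, hc, hP, hMeq⟩ := stab_struct hS hM
  obtain ⟨-, d, Q, hd, hQ, hNeq⟩ := stab_struct hT hN
  by_cases h : ∀ j, P j = Q j
  · exfalso
    have hPQ : tens P = tens Q := by rw [funext h]
    have hcd : c * d = 1 ∨ c * d = -1 := by
      rcases hc with h' | h' <;> rcases hd with h'' | h'' <;> subst h' <;> subst h'' <;> norm_num
    have hc2 : c * c = 1 := by rcases hc with h' | h' <;> subst h' <;> norm_num
    have hNM : N = (c * d) • M := by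
      rw [hNeq, hMeq, hPQ, smul_smul]
      congr 1
      rcases hc with h' | h' <;> rcases hd with h'' | h'' <;> subst h' <;> subst h'' <;> ring
    rcases hcd with h' | h'
    · rw [h', one_smul] at hNM; exact h1 hNM
    · rw [h', neg_smul, one_smul] at hNM; exact h2 hNM
  · push_neg at h
    obtain ⟨j, hj⟩ := h
    have h0 : Matrix.trace (P j * Q j) = 0 := (pauli_trace_mul (hP j) (hQ j)).resolve_left hj
    rw [hMeq, hNeq, Matrix.smul_mul, Matrix.mul_smul, smul_smul, tens_mul, Matrix.trace_smul,
      tens_trace, Finset.prod_eq_zero (Finset.mem_univ j) h0, smul_zero]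

/-- A ±1-valued multiplicative function on a finite involutive multiplicative set sums
to the cardinality or to zero. -/
lemma char_sum {α : Type*} [Monoid α] (G : Finset α) (f : α → ℂ)
    (hclosed : ∀ a ∈ G, ∀ b ∈ G, a * b ∈ G)
    (hmul : ∀ a ∈ G, ∀ b ∈ G, f (a * b) = f a * f b)
    (hinv : ∀ a ∈ G, a * a = 1) :
    (∑ a ∈ G, f a) = G.card ∨ (∑ a ∈ G, f a) = 0 := by
  by_cases h : ∀ a ∈ G, f a = 1
  · left
    rw [Finset.sum_congr rfl h, Finset.sum_const, nsmul_eq_mul, mul_one]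
  · right
    push_neg at h
    obtain ⟨a₀, ha₀, hfa₀⟩ := h
    have hbij : ∑ a ∈ G, f a = ∑ a ∈ G, f (a₀ * a) := by
      apply Finset.sum_nbij' (fun a => a₀ * a) (fun a => a₀ * a)
      · exact fun a ha => hclosed a₀ ha₀ a ha
      · exact fun a ha => hclosed a₀ ha₀ a ha
      · intro a _; rw [← mul_assoc, hinv a₀ ha₀, one_mul]
      · intro a _; rw [← mul_assoc, hinv a₀ ha₀, one_mul]
      · intro a ha; rw [← mul_assoc, hinv a₀ ha₀, one_mul]
    have : ∑ a ∈ G, f a = f a₀ * ∑ a ∈ G, f a := by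
      nth_rewrite 1 [hbij]
      rw [Finset.mul_sum]
      exact Finset.sum_congr rfl fun a ha => hmul a₀ ha₀ a ha
    have h2 : (1 - f a₀) * ∑ a ∈ G, f a = 0 := by rw [sub_mul, ← this, one_mul, sub_self]
    rcases mul_eq_zero.mp h2 with h3 | h3
    · exact absurd (by linear_combination -h3 : f a₀ = 1) hfa₀
    · exact h3

open Matrix in
lemma completeness {n : ℕ} {v : (Fin n → Fin 2) → (Fin n → Fin 2) → ℂ}
    (hv : OrthonormalFamily v) (x y : Fin n → Fin 2) :
    ∑ k, v k x * (starRingEnd ℂ) (v k y) = if x = y then 1 else 0 := by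
  classical
  set V := Matrix.of (fun (x k : Fin n → Fin 2) => v k x) with hV
  have hVHV : Vᴴ * V = 1 := by
    ext k l
    rw [Matrix.mul_apply, Matrix.one_apply]
    simp only [Matrix.conjTranspose_apply, Matrix.of_apply, hV, starRingEnd_apply]
    exact hv k l
  have hVVH : V * Vᴴ = 1 := mul_eq_one_comm.mp hVHV
  have h : (V * Vᴴ) x y = (1 : Mat n) x y := by rw [hVVH]
  rw [Matrix.mul_apply, Matrix.one_apply] at h
  simp only [Matrix.conjTranspose_apply, Matrix.of_apply, hV, starRingEnd_apply] at h ⊢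
  exact h

lemma vec_ne_zero {n : ℕ} {v : (Fin n → Fin 2) → (Fin n → Fin 2) → ℂ}
    (hv : OrthonormalFamily v) (k : Fin n → Fin 2) : ∃ x, v k x ≠ 0 := by
  by_contra h
  push_neg at h
  have := hv k k
  rw [if_pos rfl] at this
  simp only [qinner, h, mul_zero, Finset.sum_const_zero] at this
  exact one_ne_zero this.symm

lemma eig_uniq {n : ℕ} {v : (Fin n → Fin 2) → (Fin n → Fin 2) → ℂ}
    (hv : OrthonormalFamily v) (k : Fin n → Fin 2) {μ μ' : ℂ}
    (h : μ • v k = μ' • v k) : μ = μ' := by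
  obtain ⟨x, hx⟩ := vec_ne_zero hv k
  have := congrFun h x
  simp only [Pi.smul_apply, smul_eq_mul] at this
  exact mul_right_cancel₀ hx this

lemma proj_outer {n : ℕ} {S : Set (Mat n)} (hS : IsStabilizerGroup n S) (hSfin : S.Finite)
    {v : (Fin n → Fin 2) → (Fin n → Fin 2) → ℂ} (hv : OrthonormalFamily v)
    {χ : Mat n → (Fin n → Fin 2) → ℂ}
    (hχ : ∀ M ∈ S, ∀ k, M.mulVec (v k) = χ M k • v k)
    (i x y : Fin n → Fin 2) :
    ∑ M ∈ hSfin.toFinset, χ M i * M x y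
      = (2 ^ n : ℂ) * (v i x * (starRingEnd ℂ) (v i y)) := by
  classical
  have hmem : ∀ M, M ∈ hSfin.toFinset ↔ M ∈ S := fun M => Set.Finite.mem_toFinset _
  have hcard : hSfin.toFinset.card = 2 ^ n := by
    rw [← Set.ncard_eq_toFinset_card S hSfin]; exact hS.2.2.2.2.1
  have h2n : ((2 : ℂ) ^ n) = (((2 : ℝ) ^ n : ℝ) : ℂ) := by push_cast; ring
  -- character properties
  have hχ1 : ∀ k, χ 1 k = 1 := by
    intro k
    refine (eig_uniq hv k ?_).symm
    rw [← hχ 1 hS.2.1 k, Matrix.one_mulVec, one_smul]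
  have hχmul : ∀ M ∈ S, ∀ N ∈ S, ∀ k, χ (M * N) k = χ M k * χ N k := by
    intro M hM N hN k
    refine eig_uniq hv k ?_
    rw [← hχ (M * N) (hS.2.2.1 M hM N hN) k, ← Matrix.mulVec_mulVec, hχ N hN k,
      Matrix.mulVec_smul, hχ M hM k, smul_smul, mul_comm]
  have hχpm : ∀ M ∈ S, ∀ k, χ M k = 1 ∨ χ M k = -1 := by
    intro M hM k
    rw [← mul_self_eq_one_iff, ← hχmul M hM M hM k, (stab_struct hS hM).1, hχ1]
  have heig : ∀ M ∈ S, ∀ k z, (∑ w, M z w * v k w) = χ M k * v k z := by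
    intro M hM k z
    have := congrFun (hχ M hM k) z
    simpa [Matrix.mulVec, dotProduct] using this
  -- the lambda coefficients
  set lam : (Fin n → Fin 2) → ℂ := fun k => ∑ M ∈ hSfin.toFinset, χ M i * χ M k with hlam
  have hlam_i : lam i = 2 ^ n := by
    show (∑ M ∈ hSfin.toFinset, χ M i * χ M i) = 2 ^ n
    have h1 : ∀ M ∈ hSfin.toFinset, χ M i * χ M i = 1 := by
      intro M hM
      rcases hχpm M ((hmem M).mp hM) i with h | h <;> rw [h] <;> norm_num
    rw [Finset.sum_congr rfl h1, Finset.sum_const, hcard, nsmul_eq_mul, mul_one]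
    norm_num
  have hlam01 : ∀ k, lam k = 2 ^ n ∨ lam k = 0 := by
    intro k
    have hcs := char_sum hSfin.toFinset (fun M => χ M i * χ M k)
      (fun a ha b hb => (hmem _).mpr (hS.2.2.1 a ((hmem a).mp ha) b ((hmem b).mp hb)))
      (fun a ha b hb => by
        show χ (a * b) i * χ (a * b) k = (χ a i * χ a k) * (χ b i * χ b k)
        rw [hχmul a ((hmem a).mp ha) b ((hmem b).mp hb) i,
          hχmul a ((hmem a).mp ha) b ((hmem b).mp hb) k]; ring)
      (fun a ha => (stab_struct hS ((hmem a).mp ha)).1)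
    rw [hcard] at hcs
    rcases hcs with h | h
    · left
      show (∑ M ∈ hSfin.toFinset, χ M i * χ M k) = 2 ^ n
      exact_mod_cast h
    · right; exact h
  -- matrix entry expansion
  have hA : ∀ x y : Fin n → Fin 2, ∑ M ∈ hSfin.toFinset, χ M i * M x y
      = ∑ k, lam k * (v k x * (starRingEnd ℂ) (v k y)) := by
    intro x y
    have step1 : ∀ k, lam k * (v k x * (starRingEnd ℂ) (v k y))
        = ∑ M ∈ hSfin.toFinset, χ M i * ((∑ w, M x w * v k w) * (starRingEnd ℂ) (v k y)) := by
      intro k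
      rw [show lam k * (v k x * (starRingEnd ℂ) (v k y))
          = (lam k * v k x) * (starRingEnd ℂ) (v k y) by ring]
      rw [show lam k = ∑ M ∈ hSfin.toFinset, χ M i * χ M k from rfl, Finset.sum_mul,
        Finset.sum_mul]
      refine Finset.sum_congr rfl fun M hM => ?_
      rw [heig M ((hmem M).mp hM) k x]
      ring
    calc ∑ M ∈ hSfin.toFinset, χ M i * M x y
        = ∑ M ∈ hSfin.toFinset, χ M i * (∑ w, M x w * (if w = y then 1 else 0)) := by
          refine Finset.sum_congr rfl fun M hM => ?_
          congr 1
          simp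
      _ = ∑ M ∈ hSfin.toFinset, χ M i * (∑ w, M x w * (∑ k, v k w * (starRingEnd ℂ) (v k y))) := by
          refine Finset.sum_congr rfl fun M hM => ?_
          congr 1
          exact Finset.sum_congr rfl fun w _ => by rw [completeness hv w y]
      _ = ∑ k, lam k * (v k x * (starRingEnd ℂ) (v k y)) := by
          rw [show (∑ k, lam k * (v k x * (starRingEnd ℂ) (v k y)))
            = ∑ k, ∑ M ∈ hSfin.toFinset,
                χ M i * ((∑ w, M x w * v k w) * (starRingEnd ℂ) (v k y))
            from Finset.sum_congr rfl fun k _ => step1 k, Finset.sum_comm]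
          refine Finset.sum_congr rfl fun M _ => ?_
          rw [← Finset.mul_sum]
          congr 1
          calc ∑ w, M x w * (∑ k, v k w * (starRingEnd ℂ) (v k y))
              = ∑ w, ∑ k, M x w * (v k w * (starRingEnd ℂ) (v k y)) := by
                exact Finset.sum_congr rfl fun w _ => by rw [Finset.mul_sum]
            _ = ∑ k, ∑ w, M x w * (v k w * (starRingEnd ℂ) (v k y)) := Finset.sum_comm
            _ = ∑ k, (∑ w, M x w * v k w) * (starRingEnd ℂ) (v k y) := by
                refine Finset.sum_congr rfl fun k _ => ?_
                rw [Finset.sum_mul]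
                exact Finset.sum_congr rfl fun w _ => by ring
  -- trace identities
  have htr1 : ∑ M ∈ hSfin.toFinset, χ M i * Matrix.trace M = 2 ^ n := by
    rw [Finset.sum_eq_single (1 : Mat n)]
    · rw [hχ1, Matrix.trace_one, one_mul]
      norm_num [Fintype.card_fun]
    · intro M hM hne
      rcases stab_trace hS ((hmem M).mp hM) with h | h
      · exact absurd h hne
      · rw [h, mul_zero]
    · intro h
      exact absurd ((hmem 1).mpr hS.2.1) h
  have hnorm : ∀ k, ∑ z, v k z * (starRingEnd ℂ) (v k z) = 1 := by
    intro k
    have h1 := hv k k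
    rw [if_pos rfl] at h1
    rw [← h1, qinner]
    exact Finset.sum_congr rfl fun z _ => by ring
  have hsumlam : ∑ k, lam k = 2 ^ n := by
    have e1 : ∑ M ∈ hSfin.toFinset, χ M i * Matrix.trace M
        = ∑ z, ∑ M ∈ hSfin.toFinset, χ M i * M z z := by
      rw [Finset.sum_comm]
      refine Finset.sum_congr rfl fun M hM => ?_
      rw [Matrix.trace, Finset.mul_sum]
      rfl
    have e2 : ∑ z, ∑ M ∈ hSfin.toFinset, χ M i * M z z = ∑ k, lam k := by
      calc ∑ z, ∑ M ∈ hSfin.toFinset, χ M i * M z z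
          = ∑ z, ∑ k, lam k * (v k z * (starRingEnd ℂ) (v k z)) :=
            Finset.sum_congr rfl fun z _ => hA z z
        _ = ∑ k, lam k * (∑ z, v k z * (starRingEnd ℂ) (v k z)) := by
            rw [Finset.sum_comm]
            exact Finset.sum_congr rfl fun k _ => by rw [Finset.mul_sum]
        _ = ∑ k, lam k := Finset.sum_congr rfl fun k _ => by rw [hnorm k, mul_one]
    rw [← htr1, e1, e2]
  -- lam k = 0 for k ≠ i
  have hlam0 : ∀ k, k ≠ i → lam k = 0 := by
    intro k hk
    have herase : ∑ m ∈ Finset.univ.erase i, lam m = 0 := by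
      have h1 := Finset.add_sum_erase Finset.univ lam (Finset.mem_univ i)
      rw [hsumlam, hlam_i] at h1
      linear_combination h1
    have hre : ∀ m ∈ Finset.univ.erase i, 0 ≤ (lam m).re := by
      intro m _
      rcases hlam01 m with h | h <;> rw [h]
      · rw [h2n, Complex.ofReal_re]; positivity
      · norm_num
    have hre0 : ∀ m ∈ Finset.univ.erase i, (lam m).re = 0 := by
      intro m hm
      have hsum_re : ∑ m ∈ Finset.univ.erase i, (lam m).re = 0 := by
        rw [← Complex.re_sum, herase, Complex.zero_re]
      exact (Finset.sum_eq_zero_iff_of_nonneg hre).mp hsum_re m hm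
    rcases hlam01 k with h | h
    · exfalso
      have h1 := hre0 k (Finset.mem_erase.mpr ⟨hk, Finset.mem_univ k⟩)
      rw [h, h2n, Complex.ofReal_re] at h1
      have : (0:ℝ) < 2 ^ n := by positivity
      linarith
    · exact h
  -- conclusion
  rw [hA x y, Finset.sum_eq_single i]
  · rw [hlam_i]
  · intro k _ hk
    rw [hlam0 k hk, zero_mul]
  · intro h
    exact absurd (Finset.mem_univ i) h

lemma char_facts {n : ℕ} {S : Set (Mat n)} (hS : IsStabilizerGroup n S)
    {v : (Fin n → Fin 2) → (Fin n → Fin 2) → ℂ} (hv : OrthonormalFamily v)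
    {χ : Mat n → (Fin n → Fin 2) → ℂ}
    (hχ : ∀ M ∈ S, ∀ k, M.mulVec (v k) = χ M k • v k) :
    (∀ M ∈ S, ∀ N ∈ S, ∀ k, χ (M * N) k = χ M k * χ N k) ∧
    (∀ M ∈ S, ∀ k, χ M k = 1 ∨ χ M k = -1) := by
  have hχ1 : ∀ k, χ 1 k = 1 := by
    intro k
    refine (eig_uniq hv k ?_).symm
    rw [← hχ 1 hS.2.1 k, Matrix.one_mulVec, one_smul]
  have hχmul : ∀ M ∈ S, ∀ N ∈ S, ∀ k, χ (M * N) k = χ M k * χ N k := by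
    intro M hM N hN k
    refine eig_uniq hv k ?_
    rw [← hχ (M * N) (hS.2.2.1 M hM N hN) k, ← Matrix.mulVec_mulVec, hχ N hN k,
      Matrix.mulVec_smul, hχ M hM k, smul_smul, mul_comm]
  refine ⟨hχmul, fun M hM k => ?_⟩
  rw [← mul_self_eq_one_iff, ← hχmul M hM M hM k, (stab_struct hS hM).1, hχ1]

theorem stmt1 {n : ℕ} (s t : (Fin n → Fin 2) → (Fin n → Fin 2) → ℂ)
    (hs : IsStabilizerBasis n s) (ht : IsStabilizerBasis n t) :
    ∃ r : ℝ, 0 ≤ r ∧ ∀ i j, ‖qinner (s i) (t j)‖ = 0 ∨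
      ‖qinner (s i) (t j)‖ = r := by
  classical
  obtain ⟨S, hS, hsorth, hseig⟩ := hs
  obtain ⟨T, hT, htorth, hteig⟩ := ht
  -- finiteness
  have hSfin : S.Finite := by
    by_contra h
    have h0 := Set.Infinite.ncard h
    rw [hS.2.2.2.2.1] at h0
    exact (pow_ne_zero n two_ne_zero) h0
  have hTfin : T.Finite := by
    by_contra h
    have h0 := Set.Infinite.ncard h
    rw [hT.2.2.2.2.1] at h0
    exact (pow_ne_zero n two_ne_zero) h0
  have hSmem : ∀ M, M ∈ hSfin.toFinset ↔ M ∈ S := fun M => Set.Finite.mem_toFinset _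
  have hTmem : ∀ M, M ∈ hTfin.toFinset ↔ M ∈ T := fun M => Set.Finite.mem_toFinset _
  -- choose eigenvalue characters
  have hchi : ∀ M : Mat n, ∃ c : (Fin n → Fin 2) → ℂ,
      M ∈ S → ∀ k, M.mulVec (s k) = c k • s k := by
    intro M
    by_cases hM : M ∈ S
    · obtain ⟨c, hc⟩ := Classical.axiomOfChoice (hseig M hM)
      exact ⟨c, fun _ => hc⟩
    · exact ⟨fun _ => 1, fun h => absurd h hM⟩
  obtain ⟨χ, hχ⟩ := Classical.axiomOfChoice hchi
  have heta : ∀ M : Mat n, ∃ c : (Fin n → Fin 2) → ℂ,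
      M ∈ T → ∀ k, M.mulVec (t k) = c k • t k := by
    intro M
    by_cases hM : M ∈ T
    · obtain ⟨c, hc⟩ := Classical.axiomOfChoice (hteig M hM)
      exact ⟨c, fun _ => hc⟩
    · exact ⟨fun _ => 1, fun h => absurd h hM⟩
  obtain ⟨η, hη⟩ := Classical.axiomOfChoice heta
  have hχ' : ∀ M ∈ S, ∀ k, M.mulVec (s k) = χ M k • s k := fun M hM => hχ M hM
  have hη' : ∀ N ∈ T, ∀ k, N.mulVec (t k) = η N k • t k := fun N hN => hη N hN
  obtain ⟨hχmul, hχpm⟩ := char_facts hS hsorth hχ'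
  obtain ⟨hηmul, hηpm⟩ := char_facts hT htorth hη'
  -- exclusivity
  have hexcl : ∀ X : Mat n, X ∈ S → ¬(X ∈ T ∧ -X ∈ T) := by
    rintro X hX ⟨h1, h2⟩
    have hm : X * (-X) ∈ T := hT.2.2.1 X h1 (-X) h2
    rw [mul_neg, (stab_struct hS hX).1] at hm
    exact hT.2.2.2.2.2 hm
  have htrone : Matrix.trace (1 : Mat n) = (2 : ℂ) ^ n := by
    rw [Matrix.trace_one]
    norm_num [Fintype.card_fun]
  -- the intersection group
  set G : Finset (Mat n) := hSfin.toFinset.filter (fun M => M ∈ T ∨ -M ∈ T) with hGdef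
  have hGmem : ∀ M, M ∈ G ↔ (M ∈ S ∧ (M ∈ T ∨ -M ∈ T)) := by
    intro M
    rw [hGdef, Finset.mem_filter, hSmem]
  refine ⟨Real.sqrt ((G.card : ℝ) / 2 ^ n), Real.sqrt_nonneg _, ?_⟩
  intro i j
  set c := qinner (s i) (t j) with hcdef
  set f : Mat n → ℂ :=
    fun M => χ M i * (if M ∈ T then η M j else -η (-M) j) with hfdef
  -- the two matrices
  set A : Mat n := ∑ M ∈ hSfin.toFinset, χ M i • M with hAdef
  set B : Mat n := ∑ N ∈ hTfin.toFinset, η N j • N with hBdef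
  have hAentry : ∀ x y, A x y = (2:ℂ)^n * (s i x * (starRingEnd ℂ) (s i y)) := by
    intro x y
    rw [hAdef, Matrix.sum_apply]
    rw [← proj_outer hS hSfin hsorth hχ' i x y]
    exact Finset.sum_congr rfl fun M _ => rfl
  have hBentry : ∀ x y, B x y = (2:ℂ)^n * (t j x * (starRingEnd ℂ) (t j y)) := by
    intro x y
    rw [hBdef, Matrix.sum_apply]
    rw [← proj_outer hT hTfin htorth hη' j x y]
    exact Finset.sum_congr rfl fun M _ => rfl
  -- trace computed via entries
  have hc2 : c * (starRingEnd ℂ) c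
      = ∑ x, ∑ y, (s i x * (starRingEnd ℂ) (t j x))
          * ((starRingEnd ℂ) (s i y) * t j y) := by
    rw [hcdef, qinner, map_sum, mul_comm, Finset.sum_mul_sum]
    refine Finset.sum_congr rfl fun x _ => Finset.sum_congr rfl fun y _ => ?_
    rw [map_mul, Complex.conj_conj]
  have ha : Matrix.trace (A * B) = (2:ℂ)^n * ((2:ℂ)^n * (c * (starRingEnd ℂ) c)) := by
    have t1 : Matrix.trace (A * B) = ∑ x, ∑ y, A x y * B y x := by
      simp [Matrix.trace, Matrix.diag, Matrix.mul_apply]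
    rw [t1, hc2]
    simp only [Finset.mul_sum]
    refine Finset.sum_congr rfl fun x _ => Finset.sum_congr rfl fun y _ => ?_
    rw [hAentry x y, hBentry y x]
    ring
  -- trace computed via group expansion
  have hb : Matrix.trace (A * B)
      = ∑ M ∈ hSfin.toFinset, χ M i * ∑ N ∈ hTfin.toFinset, η N j * Matrix.trace (M * N) := by
    rw [hAdef, Finset.sum_mul, Matrix.trace_sum]
    refine Finset.sum_congr rfl fun M _ => ?_
    rw [Matrix.smul_mul, Matrix.trace_smul, smul_eq_mul]
    congr 1
    rw [hBdef, Finset.mul_sum, Matrix.trace_sum]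
    refine Finset.sum_congr rfl fun N _ => ?_
    rw [Matrix.mul_smul, Matrix.trace_smul, smul_eq_mul]
  -- evaluate inner sums
  have hinner : ∀ M ∈ S, ∑ N ∈ hTfin.toFinset, η N j * Matrix.trace (M * N)
      = (2:ℂ)^n * (if M ∈ T then η M j else if -M ∈ T then -η (-M) j else 0) := by
    intro M hM
    have hMM : M * M = 1 := (stab_struct hS hM).1
    have hsub : ∑ N ∈ hTfin.toFinset, η N j * Matrix.trace (M * N)
        = ∑ N ∈ hTfin.toFinset ∩ {M, -M}, η N j * Matrix.trace (M * N) := by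
      refine (Finset.sum_subset Finset.inter_subset_left ?_).symm
      intro N hN hN'
      have h1 : N ≠ M ∧ N ≠ -M := by
        by_contra hcon
        push_neg at hcon
        apply hN'
        simp only [Finset.mem_inter, Finset.mem_insert, Finset.mem_singleton]
        refine ⟨hN, ?_⟩
        by_cases he : N = M
        · exact Or.inl he
        · exact Or.inr (hcon he)
      rw [stab_trace_mul hS hT hM ((hTmem N).mp hN) h1.1 h1.2, mul_zero]
    rw [hsub]
    by_cases h1 : M ∈ T <;> by_cases h2 : -M ∈ T
    · exact absurd ⟨h1, h2⟩ (hexcl M hM)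
    · have : hTfin.toFinset ∩ {M, -M} = {M} := by
        ext N
        simp only [Finset.mem_inter, Finset.mem_insert, Finset.mem_singleton, hTmem]
        constructor
        · rintro ⟨hNT, h | h⟩
          · exact h
          · exact absurd (h ▸ hNT) h2
        · rintro rfl
          exact ⟨h1, Or.inl rfl⟩
      rw [this, Finset.sum_singleton, hMM, htrone, if_pos h1]
      ring
    · have : hTfin.toFinset ∩ {M, -M} = {-M} := by
        ext N
        simp only [Finset.mem_inter, Finset.mem_insert, Finset.mem_singleton, hTmem]
        constructor
        · rintro ⟨hNT, h | h⟩
          · exact absurd (h ▸ hNT) h1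
          · exact h
        · rintro rfl
          exact ⟨h2, Or.inr rfl⟩
      rw [this, Finset.sum_singleton, mul_neg, hMM, Matrix.trace_neg, htrone,
        if_neg h1, if_pos h2]
      ring
    · have : hTfin.toFinset ∩ {M, -M} = ∅ := by
        ext N
        simp only [Finset.mem_inter, Finset.mem_insert, Finset.mem_singleton, hTmem,
          Finset.notMem_empty, iff_false, not_and, not_or]
        intro hNT
        constructor
        · intro h; exact h1 (h ▸ hNT)
        · intro h; exact h2 (h ▸ hNT)
      rw [this, Finset.sum_empty, if_neg h1, if_neg h2]
      ring
  -- reduce to sum over G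
  have hred : Matrix.trace (A * B) = (2:ℂ)^n * ∑ M ∈ G, f M := by
    rw [hb, hGdef, Finset.sum_filter, Finset.mul_sum]
    refine Finset.sum_congr rfl fun M hM => ?_
    rw [hinner M ((hSmem M).mp hM)]
    by_cases h1 : M ∈ T <;> by_cases h2 : -M ∈ T
    · exact absurd ⟨h1, h2⟩ (hexcl M ((hSmem M).mp hM))
    · rw [if_pos h1, if_pos (Or.inl h1)]
      simp only [hfdef, if_pos h1]
      ring
    · rw [if_neg h1, if_pos h2, if_pos (Or.inr h2)]
      simp only [hfdef, if_neg h1]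
      ring
    · rw [if_neg h1, if_neg h2, if_neg (by tauto : ¬(M ∈ T ∨ -M ∈ T))]
      ring
  -- the character sum over G
  have hGsum : (∑ M ∈ G, f M) = G.card ∨ (∑ M ∈ G, f M) = 0 := by
    apply char_sum
    · -- closure
      intro a ha b hb
      rw [hGmem] at ha hb ⊢
      obtain ⟨haS, haT⟩ := ha
      obtain ⟨hbS, hbT⟩ := hb
      refine ⟨hS.2.2.1 a haS b hbS, ?_⟩
      rcases haT with h1 | h1 <;> rcases hbT with h2 | h2
      · exact Or.inl (hT.2.2.1 a h1 b h2)
      · refine Or.inr ?_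
        rw [← mul_neg]
        exact hT.2.2.1 a h1 (-b) h2
      · refine Or.inr ?_
        rw [← neg_mul]
        exact hT.2.2.1 (-a) h1 b h2
      · refine Or.inl ?_
        rw [← neg_mul_neg]
        exact hT.2.2.1 (-a) h1 (-b) h2
    · -- multiplicativity
      intro a ha b hb
      rw [hGmem] at ha hb
      obtain ⟨haS, haT⟩ := ha
      obtain ⟨hbS, hbT⟩ := hb
      have habS : a * b ∈ S := hS.2.2.1 a haS b hbS
      simp only [hfdef]
      rw [hχmul a haS b hbS i]
      rcases haT with h1 | h1 <;> rcases hbT with h2 | h2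
      · have hab : a * b ∈ T := hT.2.2.1 a h1 b h2
        rw [if_pos h1, if_pos h2, if_pos hab, hηmul a h1 b h2 j]
        ring
      · have hb' : b ∉ T := fun hc => hexcl b hbS ⟨hc, h2⟩
        have hab' : -(a * b) ∈ T := by
          rw [← mul_neg]
          exact hT.2.2.1 a h1 (-b) h2
        have hab : a * b ∉ T := fun hc => hexcl (a * b) habS ⟨hc, hab'⟩
        rw [if_pos h1, if_neg hb', if_neg hab,
          show -(a * b) = a * (-b) by rw [mul_neg], hηmul a h1 (-b) h2 j]
        ring
      · have ha' : a ∉ T := fun hc => hexcl a haS ⟨hc, h1⟩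
        have hab' : -(a * b) ∈ T := by
          rw [← neg_mul]
          exact hT.2.2.1 (-a) h1 b h2
        have hab : a * b ∉ T := fun hc => hexcl (a * b) habS ⟨hc, hab'⟩
        rw [if_neg ha', if_pos h2, if_neg hab,
          show -(a * b) = (-a) * b by rw [neg_mul], hηmul (-a) h1 b h2 j]
        ring
      · have ha' : a ∉ T := fun hc => hexcl a haS ⟨hc, h1⟩
        have hb' : b ∉ T := fun hc => hexcl b hbS ⟨hc, h2⟩
        have hab : a * b ∈ T := by
          rw [← neg_mul_neg]
          exact hT.2.2.1 (-a) h1 (-b) h2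
        rw [if_neg ha', if_neg hb', if_pos hab,
          show a * b = (-a) * (-b) by rw [neg_mul_neg], hηmul (-a) h1 (-b) h2 j]
        ring
    · -- involutions
      intro a ha
      rw [hGmem] at ha
      exact (stab_struct hS ha.1).1
  -- combine
  have h2n0 : ((2:ℂ)^n) ≠ 0 := pow_ne_zero n two_ne_zero
  have hkey : (2:ℂ)^n * (c * (starRingEnd ℂ) c) = ∑ M ∈ G, f M := by
    apply mul_left_cancel₀ h2n0
    rw [← ha, hred]
  rw [Complex.mul_conj] at hkey
  rcases hGsum with h | h
  · right
    rw [h] at hkey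
    have hr : (2:ℝ)^n * Complex.normSq c = (G.card : ℝ) := by exact_mod_cast hkey
    have hns : Complex.normSq c = (G.card : ℝ) / 2^n := by
      rw [eq_div_iff (by positivity : (2:ℝ)^n ≠ 0)]
      linarith
    rw [Complex.norm_def, hns]
  · left
    rw [h] at hkey
    have h0 : (Complex.normSq c : ℂ) = 0 := by
      rcases mul_eq_zero.mp hkey with h' | h'
      · exact absurd h' h2n0
      · exact h'
    have h0' : Complex.normSq c = 0 := by exact_mod_cast h0
    rw [Complex.norm_def, h0', Real.sqrt_zero]
end
end

section
/- For the measurement in any pair of n-qubit stabilizer bases 𝓐 = {|a_i⟩} and 𝓑 = {|b_j⟩}, the Maassen–Uffink uncertainty relation is tight: for every basis state ρ = |b_{j₀}⟩⟨b_{j₀}| (and likewise for every basis state of 𝓐), (1/2)[S(𝓐|ρ) + S(𝓑|ρ)] = −log₂(max_{i,j} |⟨a_i|b_j⟩|). -/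
/-!
STATEMENT 2: For the measurement in any pair of n-qubit stabilizer bases 𝓐 = {|a_i⟩},
𝓑 = {|b_j⟩}, the Maassen–Uffink uncertainty relation is tight: for every basis state
ρ = |b_{j₀}⟩⟨b_{j₀}| (and likewise for every basis state of 𝓐),
(1/2)[S(𝓐|ρ) + S(𝓑|ρ)] = −log₂ (max_{i,j} |⟨a_i|b_j⟩|).
-/

noncomputable section

/-- Outcome probability p = ⟨v|ρ|v⟩ for the basis vector v and the density operator ρ. -/
def prob {d : Type*} [Fintype d] (v : d → ℂ) (ρ : Matrix d d ℂ) : ℝ :=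
  (qinner v (ρ.mulVec v)).re

/-- Shannon entropy (base 2) of the measurement in the basis `v` on the state ρ. -/
def shannonEntropy {ι d : Type*} [Fintype ι] [DecidableEq ι] [Fintype d]
    (v : ι → d → ℂ) (ρ : Matrix d d ℂ) : ℝ :=
  -∑ i, prob (v i) ρ * Real.logb 2 (prob (v i) ρ)

/-- The rank-one projector |v⟩⟨v| as a matrix. -/
def outer {d : Type*} [Fintype d] (v : d → ℂ) : Matrix d d ℂ :=
  Matrix.of fun x y => v x * (starRingEnd ℂ) (v y)

namespace St

variable {d : Type*} [Fintype d] [DecidableEq d]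

lemma qinner_conj (u v : d → ℂ) : (starRingEnd ℂ) (qinner u v) = qinner v u := by
  simp [qinner, map_sum, mul_comm]

lemma outer_mulVec (v u : d → ℂ) : (outer v).mulVec u = qinner v u • v := by
  funext x
  simp only [outer, Matrix.mulVec, dotProduct, Matrix.of_apply, qinner,
    Pi.smul_apply, smul_eq_mul, Finset.sum_mul]
  exact Finset.sum_congr rfl fun y _ => by ring

lemma qinner_smul_right (c : ℂ) (u v : d → ℂ) : qinner u (c • v) = c * qinner u v := by
  simp [qinner, Finset.mul_sum]
  exact Finset.sum_congr rfl fun y _ => by ring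

lemma qinner_outer_mulVec (v u : d → ℂ) :
    qinner u ((outer v).mulVec u) = (Complex.normSq (qinner v u) : ℂ) := by
  rw [outer_mulVec, qinner_smul_right]
  rw [← qinner_conj v u, Complex.mul_conj]

lemma prob_outer (v u : d → ℂ) : prob u (outer v) = Complex.normSq (qinner v u) := by
  rw [prob, qinner_outer_mulVec, Complex.ofReal_re]

lemma completeness {v : d → d → ℂ} (hv : OrthonormalFamily v) :
    ∑ i, outer (v i) = 1 := by
  classical
  set A : Matrix d d ℂ := Matrix.of fun i x => (starRingEnd ℂ) (v i x) with hA
  set B : Matrix d d ℂ := Matrix.of fun x i => v i x with hB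
  have hAB : A * B = 1 := by
    ext i j
    simpa [hA, hB, Matrix.mul_apply, Matrix.one_apply, qinner] using hv i j
  have hBA : B * A = 1 := mul_eq_one_comm.mp hAB
  calc ∑ i, outer (v i) = B * A := by
        ext x y
        simp [Matrix.sum_apply, Matrix.mul_apply, hA, hB, outer]
    _ = 1 := hBA

lemma trace_mul_outer (A : Matrix d d ℂ) (v : d → ℂ) :
    (A * outer v).trace = qinner v (A.mulVec v) := by
  simp only [Matrix.trace, Matrix.diag, Matrix.mul_apply, outer, Matrix.of_apply, qinner,
    Matrix.mulVec, dotProduct, Finset.mul_sum]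
  exact Finset.sum_congr rfl fun x _ => Finset.sum_congr rfl fun y _ => by ring

lemma trace_eq_sum_qinner {v : d → d → ℂ} (hv : OrthonormalFamily v) (A : Matrix d d ℂ) :
    A.trace = ∑ l, qinner (v l) (A.mulVec (v l)) := by
  have h1 : A = A * 1 := by rw [mul_one]
  conv_lhs => rw [h1, ← completeness hv, Finset.mul_sum]
  rw [Matrix.trace_sum]
  exact Finset.sum_congr rfl fun l _ => trace_mul_outer A (v l)

lemma qinner_self {v : d → d → ℂ} (hv : OrthonormalFamily v) (i : d) :
    qinner (v i) (v i) = 1 := by rw [hv i i, if_pos rfl]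

lemma parseval {v : d → d → ℂ} (hv : OrthonormalFamily v) (w : d → ℂ) (hw : qinner w w = 1) :
    ∑ i, prob (v i) (outer w) = 1 := by
  have h1 : (outer w).trace = 1 := by
    rw [← one_mul (outer w), trace_mul_outer, Matrix.one_mulVec, hw]
  have h2 := trace_eq_sum_qinner hv (outer w)
  have key : ∑ i, (Complex.normSq (qinner w (v i)) : ℂ) = 1 := by
    rw [← Finset.sum_congr rfl fun i _ => qinner_outer_mulVec w (v i), ← h2, h1]
  have := congrArg Complex.re key
  simp only [Complex.re_sum, Complex.ofReal_re, Complex.one_re] at this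
  rw [← this]
  exact Finset.sum_congr rfl fun i _ => prob_outer w (v i)


def IsP (P : Matrix (Fin 2) (Fin 2) ℂ) : Prop := P = 1 ∨ P = sx ∨ P = sy ∨ P = sz

lemma pauli_mul_self {P : Matrix (Fin 2) (Fin 2) ℂ} (h : IsP P) : P * P = 1 := by
  have h1 : (1 : Matrix (Fin 2) (Fin 2) ℂ) = !![1,0;0,1] := by
    ext i j; fin_cases i <;> fin_cases j <;> simp [Matrix.one_apply]
  rcases h with h|h|h|h <;> subst h <;>
    simp [sx, sy, sz, h1, Matrix.mul_fin_two, Complex.I_mul_I] <;>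
    norm_num [Complex.ext_iff]

lemma pauli_trace_ne_one {P : Matrix (Fin 2) (Fin 2) ℂ} (h : IsP P) (hne : P ≠ 1) :
    P.trace = 0 := by
  rcases h with h|h|h|h <;> subst h
  · exact absurd rfl hne
  all_goals simp [sx, sy, sz, Matrix.trace_fin_two]

lemma pauli_trace_mul_ne {P Q : Matrix (Fin 2) (Fin 2) ℂ} (hP : IsP P) (hQ : IsP Q)
    (hne : P ≠ Q) : (P * Q).trace = 0 := by
  have h1 : (1 : Matrix (Fin 2) (Fin 2) ℂ) = !![1,0;0,1] := by
    ext i j; fin_cases i <;> fin_cases j <;> simp [Matrix.one_apply]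
  rcases hP with h|h|h|h <;> rcases hQ with h'|h'|h'|h' <;> subst h <;> subst h' <;>
    first
      | exact absurd rfl hne
      | simp [sx, sy, sz, h1, Matrix.mul_fin_two, Matrix.trace_fin_two, Complex.I_mul_I]


def kron (n : ℕ) (P : Fin n → Matrix (Fin 2) (Fin 2) ℂ) :
    Matrix (Fin n → Fin 2) (Fin n → Fin 2) ℂ :=
  Matrix.of fun x y => ∏ j, P j (x j) (y j)

lemma kron_mul (P Q : Fin n → Matrix (Fin 2) (Fin 2) ℂ) :
    kron n P * kron n Q = kron n (fun j => P j * Q j) := by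
  ext x y
  simp only [kron, Matrix.mul_apply, Matrix.of_apply]
  rw [Finset.prod_univ_sum, Fintype.piFinset_univ]
  exact Finset.sum_congr rfl fun z _ => (Finset.prod_mul_distrib).symm

lemma kron_one : kron n (fun _ => 1) = 1 := by
  ext x y
  simp only [kron, Matrix.of_apply, Matrix.one_apply]
  by_cases h : x = y
  · subst h; simp [Matrix.one_apply]
  · rw [if_neg h]
    obtain ⟨j, hj⟩ : ∃ j, x j ≠ y j := by
      by_contra hc; push_neg at hc; exact h (funext hc)
    exact Finset.prod_eq_zero (Finset.mem_univ j) (by simp [Matrix.one_apply, hj])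

lemma kron_trace (P : Fin n → Matrix (Fin 2) (Fin 2) ℂ) :
    (kron n P).trace = ∏ j, (P j).trace := by
  simp only [Matrix.trace, Matrix.diag, kron, Matrix.of_apply]
  rw [Finset.prod_univ_sum, Fintype.piFinset_univ]


lemma isPauli_kron (hM : IsPauli n M) :
    ∃ (c : ℂ), c ≠ 0 ∧ (c = 1 ∨ c = -1 ∨ c = Complex.I ∨ c = -Complex.I) ∧
      ∃ P : Fin n → Matrix (Fin 2) (Fin 2) ℂ, (∀ j, IsP (P j)) ∧ M = c • kron n P := by
  obtain ⟨c, P, hc, hP, hMeq⟩ := hM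
  refine ⟨c, ?_, hc, P, hP, hMeq⟩
  rcases hc with h|h|h|h <;> subst h <;> simp [Complex.I_ne_zero]

lemma smul_kron_entry (c : ℂ) (P : Fin n → Matrix (Fin 2) (Fin 2) ℂ) (x : Fin n → Fin 2) :
    True := trivial

lemma smul_one_eq_one {c : ℂ} (h : c • (1 : Matrix (Fin n → Fin 2) (Fin n → Fin 2) ℂ) = 1) :
    c = 1 := by
  have x : Fin n → Fin 2 := fun _ => 0
  have := congrFun (congrFun h x) x
  simpa [Matrix.one_apply] using this

lemma pauli_sq (hM : IsPauli n M) : M * M = 1 ∨ M * M = -1 := by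
  obtain ⟨c, hc0, hc, P, hP, hMeq⟩ := isPauli_kron hM
  have hK : kron n P * kron n P = 1 := by
    rw [kron_mul, show (fun j => P j * P j) = fun _ => (1 : Matrix (Fin 2) (Fin 2) ℂ) from
      funext fun j => pauli_mul_self (hP j), kron_one]
  have : M * M = (c * c) • (1 : Matrix (Fin n → Fin 2) (Fin n → Fin 2) ℂ) := by
    rw [hMeq, Matrix.smul_mul, Matrix.mul_smul, hK, smul_smul]
  rcases hc with h|h|h|h <;> subst h <;> rw [this] <;>
    simp [Complex.I_mul_I]

lemma pauli_eigenpm (hM : IsPauli n M) (hsq : M * M = 1) :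
    (M.trace = 0 ∨ M = 1 ∨ M = -1) := by
  obtain ⟨c, hc0, hc, P, hP, hMeq⟩ := isPauli_kron hM
  by_cases hall : ∀ j, P j = 1
  · have hM1 : M = c • (1 : Matrix (Fin n → Fin 2) (Fin n → Fin 2) ℂ) := by
      rw [hMeq, show P = fun _ => (1 : Matrix (Fin 2) (Fin 2) ℂ) from funext hall, kron_one]
    have hMM : M * M = (c * c) • (1 : Matrix (Fin n → Fin 2) (Fin n → Fin 2) ℂ) := by
      rw [hM1, Matrix.smul_mul, Matrix.mul_smul, smul_smul, mul_one]
    have hcc : c * c = 1 := smul_one_eq_one (by rw [← hMM, hsq])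
    have : c = 1 ∨ c = -1 := mul_self_eq_one_iff.mp hcc
    rcases this with h|h <;> subst h
    · right; left; rw [hM1, one_smul]
    · right; right; rw [hM1, neg_smul, one_smul]
  · left
    push_neg at hall
    obtain ⟨j, hj⟩ := hall
    rw [hMeq, Matrix.trace_smul, kron_trace]
    rw [Finset.prod_eq_zero (Finset.mem_univ j) (pauli_trace_ne_one (hP j) hj)]
    simp

lemma pauli_dichotomy (hM : IsPauli n M) (hN : IsPauli n N)
    (hMsq : M * M = 1) (hNsq : N * N = 1) :
    (M * N).trace = 0 ∨ ∃ lam : ℂ, (lam = 1 ∨ lam = -1) ∧ N = lam • M := by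
  obtain ⟨c, hc0, hc, P, hP, hMeq⟩ := isPauli_kron hM
  obtain ⟨c', hc0', hc', Q, hQ, hNeq⟩ := isPauli_kron hN
  by_cases hall : ∀ j, P j = Q j
  · right
    have hPQ : Q = P := funext fun j => (hall j).symm
    have hNM : N = (c' * c⁻¹) • M := by
      rw [hNeq, hMeq, hPQ, smul_smul]
      congr 1
      field_simp
    refine ⟨c' * c⁻¹, ?_, hNM⟩
    apply mul_self_eq_one_iff.mp
    apply smul_one_eq_one (c := (c' * c⁻¹) * (c' * c⁻¹))
    have : N * N = ((c' * c⁻¹) * (c' * c⁻¹)) • (M * M) := by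
      rw [hNM, Matrix.smul_mul, Matrix.mul_smul, smul_smul]
    rw [hMsq] at this
    rw [← this, hNsq]
  · left
    push_neg at hall
    obtain ⟨j, hj⟩ := hall
    rw [hMeq, hNeq, Matrix.smul_mul, Matrix.mul_smul, smul_smul]
    rw [kron_mul, Matrix.trace_smul, kron_trace]
    rw [Finset.prod_eq_zero (Finset.mem_univ j) (pauli_trace_mul_ne (hP j) (hQ j) hj)]
    simp


lemma sum_mulVec {α : Type*} (T : Finset α) (f : α → Matrix d d ℂ) (w : d → ℂ) :
    (∑ M ∈ T, f M).mulVec w = ∑ M ∈ T, (f M).mulVec w := by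
  funext x
  simp only [Matrix.mulVec, dotProduct, Finset.sum_apply, Matrix.sum_apply,
    Finset.sum_mul]
  exact Finset.sum_comm

lemma eq_of_mulVec_eq {v : d → d → ℂ} (hv : OrthonormalFamily v) {R R' : Matrix d d ℂ}
    (h : ∀ k, R.mulVec (v k) = R'.mulVec (v k)) : R = R' := by
  set A : Matrix d d ℂ := Matrix.of fun i x => (starRingEnd ℂ) (v i x) with hA
  set V : Matrix d d ℂ := Matrix.of fun x i => v i x with hV
  have hAV : A * V = 1 := by
    ext i j
    simpa [hA, hV, Matrix.mul_apply, Matrix.one_apply, qinner] using hv i j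
  have hVA : V * A = 1 := mul_eq_one_comm.mp hAV
  have hRV : R * V = R' * V := by
    ext x k
    have := congrFun (h k) x
    simpa [hV, Matrix.mul_apply, Matrix.mulVec, dotProduct] using this
  calc R = R * (V * A) := by rw [hVA, mul_one]
    _ = (R * V) * A := by rw [mul_assoc]
    _ = (R' * V) * A := by rw [hRV]
    _ = R' * (V * A) := by rw [mul_assoc]
    _ = R' := by rw [hVA, mul_one]

lemma smul_cancel_basis {v : d → d → ℂ} (hv : OrthonormalFamily v) (i : d) {x y : ℂ}
    (h : x • v i = y • v i) : x = y := by
  have hx : qinner (v i) (x • v i) = x := by rw [qinner_smul_right, qinner_self hv, mul_one]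
  have hy : qinner (v i) (y • v i) = y := by rw [qinner_smul_right, qinner_self hv, mul_one]
  rw [← hx, ← hy, h]

lemma char_sum_zero {T : Finset (Matrix d d ℂ)}
    (hmul : ∀ M ∈ T, ∀ N ∈ T, M * N ∈ T) (hsq : ∀ M ∈ T, M * M = 1)
    {η : Matrix d d ℂ → ℂ} (hη : ∀ M ∈ T, ∀ N ∈ T, η (M * N) = η M * η N)
    {M₀ : Matrix d d ℂ} (hM₀ : M₀ ∈ T) (hval : η M₀ = -1) : ∑ M ∈ T, η M = 0 := by
  have e1 : ∑ M ∈ T, η (M₀ * M) = ∑ M ∈ T, η M := by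
    refine Finset.sum_nbij' (fun M => M₀ * M) (fun M => M₀ * M)
      (fun M hM => hmul _ hM₀ _ hM) (fun M hM => hmul _ hM₀ _ hM) ?_ ?_ (fun M hM => rfl)
    · intro M hM; show M₀ * (M₀ * M) = M; rw [← mul_assoc, hsq _ hM₀, one_mul]
    · intro M hM; show M₀ * (M₀ * M) = M; rw [← mul_assoc, hsq _ hM₀, one_mul]
  have e2 : ∑ M ∈ T, η (M₀ * M) = -∑ M ∈ T, η M := by
    rw [Finset.sum_congr rfl (fun M hM => hη _ hM₀ _ hM), ← Finset.mul_sum, hval]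
    ring
  have h3 : ∑ M ∈ T, η M = -∑ M ∈ T, η M := e1.symm.trans e2
  have h2 : ∑ M ∈ T, η M + ∑ M ∈ T, η M = 0 := by linear_combination h3
  exact add_self_eq_zero.mp h2

lemma char_sum_cases {T : Finset (Matrix d d ℂ)}
    (hmul : ∀ M ∈ T, ∀ N ∈ T, M * N ∈ T) (hsq : ∀ M ∈ T, M * M = 1)
    {η : Matrix d d ℂ → ℂ} (hη : ∀ M ∈ T, ∀ N ∈ T, η (M * N) = η M * η N)
    (hpm : ∀ M ∈ T, η M = 1 ∨ η M = -1) :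
    ((∀ M ∈ T, η M = 1) ∧ ∑ M ∈ T, η M = T.card) ∨ ∑ M ∈ T, η M = 0 := by
  by_cases h : ∀ M ∈ T, η M = 1
  · left
    refine ⟨h, ?_⟩
    rw [Finset.sum_congr rfl h, Finset.sum_const, nsmul_eq_mul, mul_one]
  · right
    push_neg at h
    obtain ⟨M₀, hM₀, hne⟩ := h
    exact char_sum_zero hmul hsq hη hM₀ ((hpm M₀ hM₀).resolve_left hne)

lemma pm_mul {x y : ℂ} (hx : x = 1 ∨ x = -1) (hy : y = 1 ∨ y = -1) :
    x * y = 1 ∨ x * y = -1 := by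
  rcases hx with h|h <;> rcases hy with h'|h' <;> subst h <;> subst h' <;> norm_num


def chi {n : ℕ} (v : (Fin n → Fin 2) → (Fin n → Fin 2) → ℂ) (i : Fin n → Fin 2)
    (M : Matrix (Fin n → Fin 2) (Fin n → Fin 2) ℂ) : ℂ := qinner (v i) (M.mulVec (v i))

lemma re_two_pow (n : ℕ) : ((2 : ℂ) ^ n).re = (2 : ℝ) ^ n := by
  rw [show (2:ℂ) = ((2:ℝ):ℂ) by norm_num, ← Complex.ofReal_pow, Complex.ofReal_re]

lemma stab_facts {n : ℕ} {S : Set (Matrix (Fin n → Fin 2) (Fin n → Fin 2) ℂ)}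
    (hS : IsStabilizerGroup n S) {v : (Fin n → Fin 2) → (Fin n → Fin 2) → ℂ}
    (hbv : IsBasisOfStabilizer n S v) {F : Finset (Matrix (Fin n → Fin 2) (Fin n → Fin 2) ℂ)}
    (hF : ∀ M, M ∈ F ↔ M ∈ S) :
    (1 : Matrix (Fin n → Fin 2) (Fin n → Fin 2) ℂ) ∈ F ∧
    (∀ M ∈ F, ∀ N ∈ F, M * N ∈ F) ∧
    (∀ M ∈ F, M * M = 1) ∧
    (∀ M ∈ F, M ≠ 1 → M.trace = 0) ∧
    (∀ M ∈ F, ∀ i, M.mulVec (v i) = chi v i M • v i) ∧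
    (∀ i, ∀ M ∈ F, ∀ N ∈ F, chi v i (M * N) = chi v i M * chi v i N) ∧
    (∀ i, ∀ M ∈ F, chi v i M * chi v i M = 1) ∧
    (∀ i, ∀ M ∈ F, chi v i M = 1 ∨ chi v i M = -1) ∧
    ((-1 : Matrix (Fin n → Fin 2) (Fin n → Fin 2) ℂ) ∉ F) := by
  obtain ⟨hPauli, h1S, hmulS, hcommS, hncard, hnegS⟩ := hS
  obtain ⟨hv, heig⟩ := hbv
  have h1F : (1 : Matrix (Fin n → Fin 2) (Fin n → Fin 2) ℂ) ∈ F := (hF 1).mpr h1S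
  have hmulF : ∀ M ∈ F, ∀ N ∈ F, M * N ∈ F := fun M hM N hN =>
    (hF _).mpr (hmulS M ((hF M).mp hM) N ((hF N).mp hN))
  have hsqF : ∀ M ∈ F, M * M = 1 := by
    intro M hM
    rcases pauli_sq (hPauli M ((hF M).mp hM)) with h|h
    · exact h
    · exact absurd (h ▸ hmulS M ((hF M).mp hM) M ((hF M).mp hM)) hnegS
  have htr0 : ∀ M ∈ F, M ≠ 1 → M.trace = 0 := by
    intro M hM hne
    rcases pauli_eigenpm (hPauli M ((hF M).mp hM)) (hsqF M hM) with h|h|h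
    · exact h
    · exact absurd h hne
    · exact absurd (h ▸ ((hF M).mp hM)) hnegS
  have chiE : ∀ M ∈ F, ∀ i, M.mulVec (v i) = chi v i M • v i := by
    intro M hM i
    obtain ⟨μ, hμ⟩ := heig M ((hF M).mp hM) i
    have : chi v i M = μ := by rw [chi, hμ, qinner_smul_right, qinner_self hv, mul_one]
    rw [this, hμ]
  have chiMul : ∀ i, ∀ M ∈ F, ∀ N ∈ F, chi v i (M * N) = chi v i M * chi v i N := by
    intro i M hM N hN
    have h1 : (M * N).mulVec (v i) = chi v i (M * N) • v i := chiE _ (hmulF M hM N hN) i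
    have h2 : (M * N).mulVec (v i) = (chi v i M * chi v i N) • v i := by
      rw [← Matrix.mulVec_mulVec, chiE N hN, Matrix.mulVec_smul, chiE M hM, smul_smul,
        mul_comm]
    exact smul_cancel_basis hv i (h1.symm.trans h2)
  have chiSq : ∀ i, ∀ M ∈ F, chi v i M * chi v i M = 1 := by
    intro i M hM
    have h1 : (M * M).mulVec (v i) = (chi v i M * chi v i M) • v i := by
      rw [← Matrix.mulVec_mulVec, chiE M hM, Matrix.mulVec_smul, chiE M hM, smul_smul]
    rw [hsqF M hM, Matrix.one_mulVec] at h1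
    have h2 : (chi v i M * chi v i M) • v i = (1 : ℂ) • v i := by rw [← h1, one_smul]
    exact smul_cancel_basis hv i h2
  have chiPM : ∀ i, ∀ M ∈ F, chi v i M = 1 ∨ chi v i M = -1 := fun i M hM =>
    mul_self_eq_one_iff.mp (chiSq i M hM)
  exact ⟨h1F, hmulF, hsqF, htr0, chiE, chiMul, chiSq, chiPM, fun h => hnegS ((hF _).mp h)⟩

lemma proj_formula {n : ℕ} {S : Set (Matrix (Fin n → Fin 2) (Fin n → Fin 2) ℂ)}
    (hS : IsStabilizerGroup n S) {v : (Fin n → Fin 2) → (Fin n → Fin 2) → ℂ}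
    (hbv : IsBasisOfStabilizer n S v) {F : Finset (Matrix (Fin n → Fin 2) (Fin n → Fin 2) ℂ)}
    (hF : ∀ M, M ∈ F ↔ M ∈ S) (hcard : F.card = 2 ^ n) (j : Fin n → Fin 2) :
    ∑ M ∈ F, chi v j M • M = (2 ^ n : ℂ) • outer (v j) := by
  obtain ⟨h1F, hmulF, hsqF, htr0, chiE, chiMul, chiSq, chiPM, hnegF⟩ := stab_facts hS hbv hF
  have hv := hbv.1
  have chi1 : ∀ i, chi v i 1 = 1 := fun i => by
    rw [chi, Matrix.one_mulVec, qinner_self hv]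
  have hQmul : ∀ k, (∑ M ∈ F, chi v j M • M).mulVec (v k)
      = (∑ M ∈ F, chi v j M * chi v k M) • v k := by
    intro k
    rw [sum_mulVec]
    have h : ∀ M ∈ F, (chi v j M • M).mulVec (v k) = (chi v j M * chi v k M) • v k := by
      intro M hM
      rw [Matrix.smul_mulVec, chiE M hM k, smul_smul]
    rw [Finset.sum_congr rfl h, ← Finset.sum_smul]
  have hdiag : ∑ M ∈ F, chi v j M * chi v j M = (2 ^ n : ℂ) := by
    rw [Finset.sum_congr rfl (chiSq j), Finset.sum_const, hcard, nsmul_eq_mul, mul_one]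
    push_cast
    ring
  have hoff : ∀ k, k ≠ j → ∑ M ∈ F, chi v j M * chi v k M = 0 := by
    intro k hk
    have hηmul : ∀ M ∈ F, ∀ N ∈ F, (fun M => chi v j M * chi v k M) (M * N)
        = (fun M => chi v j M * chi v k M) M * (fun M => chi v j M * chi v k M) N := by
      intro M hM N hN
      simp only
      rw [chiMul j M hM N hN, chiMul k M hM N hN]
      ring
    have hηpm : ∀ M ∈ F, (fun M => chi v j M * chi v k M) M = 1 ∨
        (fun M => chi v j M * chi v k M) M = -1 := fun M hM =>
      pm_mul (chiPM j M hM) (chiPM k M hM)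
    rcases char_sum_cases hmulF hsqF hηmul hηpm with ⟨hall, _⟩ | h0
    · exfalso
      have hsame : ∀ M ∈ F, chi v k M = chi v j M := by
        intro M hM
        have h1 := hall M hM
        calc chi v k M = (chi v j M * chi v j M) * chi v k M := by
              rw [chiSq j M hM, one_mul]
          _ = chi v j M * (chi v j M * chi v k M) := by ring
          _ = chi v j M := by rw [h1, mul_one]
      have hs : ∀ l, (∑ M ∈ F, chi v j M * chi v l M).re = 0 ∨
          (∑ M ∈ F, chi v j M * chi v l M).re = (2 ^ n : ℝ) := by
        intro l
        have hmul' : ∀ M ∈ F, ∀ N ∈ F, (fun M => chi v j M * chi v l M) (M * N)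
            = (fun M => chi v j M * chi v l M) M * (fun M => chi v j M * chi v l M) N := by
          intro M hM N hN
          simp only
          rw [chiMul j M hM N hN, chiMul l M hM N hN]
          ring
        have hpm' : ∀ M ∈ F, (fun M => chi v j M * chi v l M) M = 1 ∨
            (fun M => chi v j M * chi v l M) M = -1 := fun M hM =>
          pm_mul (chiPM j M hM) (chiPM l M hM)
        rcases char_sum_cases hmulF hsqF hmul' hpm' with ⟨_, hval⟩ | h0
        · right
          rw [hval, hcard]
          push_cast
          rw [re_two_pow]
        · left
          rw [h0]
          norm_num
      have htrQ : (∑ M ∈ F, chi v j M • M).trace = (2 ^ n : ℂ) := by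
        rw [Matrix.trace_sum]
        have h : ∀ M ∈ F, (chi v j M • M).trace = chi v j M * M.trace := by
          intro M _
          rw [Matrix.trace_smul, smul_eq_mul]
        rw [Finset.sum_congr rfl h]
        rw [Finset.sum_eq_single_of_mem 1 h1F (fun M hM hne => by rw [htr0 M hM hne, mul_zero])]
        rw [chi1, Matrix.trace_one, one_mul]
        norm_num [Fintype.card_fun]
      have htrQ2 : (∑ M ∈ F, chi v j M • M).trace
          = ∑ l, ∑ M ∈ F, chi v j M * chi v l M := by
        rw [trace_eq_sum_qinner hv]
        refine Finset.sum_congr rfl (fun l _ => ?_)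
        rw [hQmul l, qinner_smul_right, qinner_self hv, mul_one]
      have hre : ∑ l, (∑ M ∈ F, chi v j M * chi v l M).re = (2 ^ n : ℝ) := by
        have h1 := htrQ2.symm.trans htrQ
        have h2 := congrArg Complex.re h1
        rw [Complex.re_sum, re_two_pow] at h2
        exact h2
      have hsj : (∑ M ∈ F, chi v j M * chi v j M).re = (2 ^ n : ℝ) := by
        rw [hdiag, re_two_pow]
      have hsk : (∑ M ∈ F, chi v j M * chi v k M).re = (2 ^ n : ℝ) := by
        have : ∑ M ∈ F, chi v j M * chi v k M = ∑ M ∈ F, chi v j M * chi v j M :=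
          Finset.sum_congr rfl (fun M hM => by rw [hsame M hM])
        rw [this, hdiag, re_two_pow]
      have hpos : (0 : ℝ) < 2 ^ n := by positivity
      have hle : ∑ l ∈ ({j, k} : Finset (Fin n → Fin 2)), (∑ M ∈ F, chi v j M * chi v l M).re
          ≤ ∑ l, (∑ M ∈ F, chi v j M * chi v l M).re := by
        apply Finset.sum_le_sum_of_subset_of_nonneg (Finset.subset_univ _)
        intro l _ _
        rcases hs l with h|h <;> rw [h] <;> positivity
      rw [Finset.sum_pair (Ne.symm hk)] at hle
      rw [hsj, hsk, hre] at hle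
      linarith
    · exact h0
  apply eq_of_mulVec_eq hv
  intro k
  rw [hQmul k, Matrix.smul_mulVec, outer_mulVec]
  by_cases hkj : k = j
  · subst hkj
    rw [hdiag, qinner_self hv, one_smul]
  · rw [hoff k hkj, hv j k, if_neg (fun h => hkj h.symm), zero_smul, zero_smul, smul_zero]
lemma two_pow_ne' (n : ℕ) : ((2 : ℂ) ^ n) ≠ 0 := pow_ne_zero n two_ne_zero

lemma overlap_const {n : ℕ} {SA SB : Set (Matrix (Fin n → Fin 2) (Fin n → Fin 2) ℂ)}
    (hSA : IsStabilizerGroup n SA) (hSB : IsStabilizerGroup n SB)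
    {a b : (Fin n → Fin 2) → (Fin n → Fin 2) → ℂ}
    (hba : IsBasisOfStabilizer n SA a) (hbb : IsBasisOfStabilizer n SB b) :
    ∃ c : ℝ, 0 < c ∧ ∀ i j, Complex.normSq (qinner (b j) (a i)) = 0 ∨
      Complex.normSq (qinner (b j) (a i)) = c := by
  classical
  -- Finsets for the two groups
  have hfinA : SA.Finite := by
    by_contra h
    have h0 := hSA.2.2.2.2.1
    rw [Set.Infinite.ncard h] at h0
    exact (pow_ne_zero n two_ne_zero) h0.symm
  have hfinB : SB.Finite := by
    by_contra h
    have h0 := hSB.2.2.2.2.1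
    rw [Set.Infinite.ncard h] at h0
    exact (pow_ne_zero n two_ne_zero) h0.symm
  set FA := hfinA.toFinset with hFAdef
  set FB := hfinB.toFinset with hFBdef
  have hFA : ∀ M, M ∈ FA ↔ M ∈ SA := fun M => hfinA.mem_toFinset
  have hFB : ∀ M, M ∈ FB ↔ M ∈ SB := fun M => hfinB.mem_toFinset
  have hcardA : FA.card = 2 ^ n := by
    rw [hFAdef, ← Set.ncard_eq_toFinset_card SA hfinA]
    exact hSA.2.2.2.2.1
  have hcardB : FB.card = 2 ^ n := by
    rw [hFBdef, ← Set.ncard_eq_toFinset_card SB hfinB]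
    exact hSB.2.2.2.2.1
  obtain ⟨h1FA, hmulFA, hsqFA, htr0A, chiEA, chiMulA, chiSqA, chiPMA, hnegFA⟩ :=
    stab_facts hSA hba hFA
  obtain ⟨h1FB, hmulFB, hsqFB, htr0B, chiEB, chiMulB, chiSqB, chiPMB, hnegFB⟩ :=
    stab_facts hSB hbb hFB
  have pauliA : ∀ M ∈ FA, IsPauli n M := fun M hM => hSA.1 M ((hFA M).mp hM)
  have pauliB : ∀ M ∈ FB, IsPauli n M := fun M hM => hSB.1 M ((hFB M).mp hM)
  -- the intersection subgroup
  set lam : Matrix (Fin n → Fin 2) (Fin n → Fin 2) ℂ → ℂ :=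
    fun M => if M ∈ FB then 1 else -1 with hlamdef
  set T : Finset (Matrix (Fin n → Fin 2) (Fin n → Fin 2) ℂ) :=
    FA.filter (fun M => M ∈ FB ∨ -M ∈ FB) with hTdef
  have hTsubA : ∀ M ∈ T, M ∈ FA := fun M hM => (Finset.mem_filter.mp hM).1
  have hlam_pm : ∀ M, lam M = 1 ∨ lam M = -1 := by
    intro M
    rw [hlamdef]
    by_cases h : M ∈ FB <;> simp [h]
  have hlam_mem : ∀ M ∈ T, lam M • M ∈ FB := by
    intro M hM
    rcases (Finset.mem_filter.mp hM).2 with h|h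
    · rw [hlamdef]; simp only [if_pos h]; rwa [one_smul]
    · have hMn : M ∉ FB := by
        intro hMB
        have : M * (-M) ∈ FB := by
          have : (-M : Matrix (Fin n → Fin 2) (Fin n → Fin 2) ℂ) ∈ FB := h
          exact hmulFB M hMB _ this
        rw [mul_neg, hsqFA M (hTsubA M hM)] at this
        exact hnegFB this
      rw [hlamdef]; simp only [if_neg hMn]
      rw [neg_smul, one_smul]
      exact h
  have huniq : ∀ M ∈ FA, ∀ μ ν : ℂ, (μ = 1 ∨ μ = -1) → (ν = 1 ∨ ν = -1) →
      μ • M ∈ FB → ν • M ∈ FB → μ = ν := by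
    intro M hM μ ν hμ hν h1 h2
    by_contra hne
    have hμν : μ * ν = -1 := by
      rcases hμ with h|h <;> rcases hν with h'|h' <;> subst h <;> subst h' <;> simp_all
    have hprod : (μ • M) * (ν • M) = -1 := by
      rw [Matrix.smul_mul, Matrix.mul_smul, smul_smul, hsqFA M hM, hμν]
      simp
    exact hnegFB (hprod ▸ hmulFB _ h1 _ h2)
  have hTmem_of : ∀ M ∈ FA, ∀ N ∈ FB, (M * N).trace ≠ 0 → M ∈ T ∧ N = lam M • M := by
    intro M hM N hN htr
    rcases pauli_dichotomy (pauliA M hM) (pauliB N hN) (hsqFA M hM) (hsqFB N hN) with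
      h | ⟨μ, hμpm, hμ⟩
    · exact absurd h htr
    have hMT : M ∈ T := by
      rw [hTdef, Finset.mem_filter]
      refine ⟨hM, ?_⟩
      rcases hμpm with h|h
      · left; rw [h, one_smul] at hμ; rwa [← hμ]
      · right; rw [h, neg_smul, one_smul] at hμ; rwa [← hμ]
    refine ⟨hMT, ?_⟩
    have := huniq M hM μ (lam M) hμpm (hlam_pm M) (hμ ▸ hN) (hlam_mem M hMT)
    rw [hμ, this]
  -- inner sum over N
  have hinner : ∀ j, ∀ M ∈ FA, (∑ N ∈ FB, chi b j N * (M * N).trace)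
      = if M ∈ T then chi b j (lam M • M) * (lam M * 2 ^ n) else 0 := by
    intro j M hM
    by_cases hMT : M ∈ T
    · rw [if_pos hMT]
      rw [Finset.sum_eq_single_of_mem (lam M • M) (hlam_mem M hMT) ?side]
      case side =>
        intro N hN hne
        by_cases htr : (M * N).trace = 0
        · rw [htr, mul_zero]
        · exact absurd (hTmem_of M hM N hN htr).2 hne
      congr 1
      rw [Matrix.mul_smul, Matrix.trace_smul, hsqFA M hM, Matrix.trace_one, smul_eq_mul]
      congr 1
      norm_num [Fintype.card_fun]
    · rw [if_neg hMT]
      apply Finset.sum_eq_zero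
      intro N hN
      by_cases htr : (M * N).trace = 0
      · rw [htr, mul_zero]
      · exact absurd (hTmem_of M hM N hN htr).1 hMT
  -- main trace identity
  have hmain : ∀ i j, ((2 : ℂ) ^ n * 2 ^ n) * (Complex.normSq (qinner (b j) (a i)) : ℂ)
      = (∑ M ∈ T, chi a i M * (chi b j (lam M • M) * lam M)) * 2 ^ n := by
    intro i j
    have hPA := proj_formula hSA hba hFA hcardA i
    have hPB := proj_formula hSB hbb hFB hcardB j
    have step1 : ((2 : ℂ) ^ n * 2 ^ n) * (Complex.normSq (qinner (b j) (a i)) : ℂ)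
        = (((2 ^ n : ℂ) • outer (b j)) * ((2 ^ n : ℂ) • outer (a i))).trace := by
      rw [Matrix.smul_mul, Matrix.mul_smul, smul_smul, Matrix.trace_smul, smul_eq_mul,
        trace_mul_outer, qinner_outer_mulVec]
    have step2 : (((2 ^ n : ℂ) • outer (b j)) * ((2 ^ n : ℂ) • outer (a i))).trace
        = ∑ M ∈ FA, chi a i M * ∑ N ∈ FB, chi b j N * (M * N).trace := by
      rw [← hPA, ← hPB, Finset.sum_mul_sum]
      rw [Matrix.trace_sum]
      have h1 : ∀ N ∈ FB, (∑ M ∈ FA, (chi b j N • N) * (chi a i M • M)).trace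
          = ∑ M ∈ FA, chi a i M * (chi b j N * (M * N).trace) := by
        intro N hN
        rw [Matrix.trace_sum]
        refine Finset.sum_congr rfl (fun M hM => ?_)
        rw [Matrix.smul_mul, Matrix.mul_smul, smul_smul, Matrix.trace_smul, smul_eq_mul,
          Matrix.trace_mul_comm]
        ring
      rw [Finset.sum_congr rfl h1, Finset.sum_comm]
      exact Finset.sum_congr rfl (fun M _ => by rw [Finset.mul_sum])
    rw [step1, step2]
    have step3 : ∀ M ∈ FA, chi a i M * ∑ N ∈ FB, chi b j N * (M * N).trace
        = if M ∈ T then (chi a i M * (chi b j (lam M • M) * lam M)) * 2 ^ n else 0 := by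
      intro M hM
      rw [hinner j M hM]
      by_cases hMT : M ∈ T
      · rw [if_pos hMT, if_pos hMT]; ring
      · rw [if_neg hMT, if_neg hMT, mul_zero]
    have hsub : T ⊆ FA := by rw [hTdef]; exact Finset.filter_subset _ _
    rw [Finset.sum_congr rfl step3, Finset.sum_ite_mem, Finset.inter_eq_right.mpr hsub,
      Finset.sum_mul]
  -- the constant
  have hval : ∀ i j, Complex.normSq (qinner (b j) (a i)) = 0 ∨
      Complex.normSq (qinner (b j) (a i)) = (T.card : ℝ) / 2 ^ n := by
    intro i j
    have h := hmain i j
    have h2 : (2 : ℂ) ^ n * (Complex.normSq (qinner (b j) (a i)) : ℂ)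
        = ∑ M ∈ T, chi a i M * (chi b j (lam M • M) * lam M) := by
      have := mul_right_cancel₀ (two_pow_ne' n) (by linear_combination h :
        ((2 : ℂ) ^ n * ↑(Complex.normSq (qinner (b j) (a i)))) * 2 ^ n
          = (∑ M ∈ T, chi a i M * (chi b j (lam M • M) * lam M)) * 2 ^ n)
      exact this
    -- character structure on T
    have hTmul : ∀ M ∈ T, ∀ N ∈ T, M * N ∈ T := by
      intro M hM N hN
      rw [hTdef, Finset.mem_filter]
      refine ⟨hmulFA M (hTsubA M hM) N (hTsubA N hN), ?_⟩
      have hprod : (lam M * lam N) • (M * N) ∈ FB := by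
        have := hmulFB _ (hlam_mem M hM) _ (hlam_mem N hN)
        rwa [Matrix.smul_mul, Matrix.mul_smul, smul_smul] at this
      rcases pm_mul (hlam_pm M) (hlam_pm N) with h|h
      · left; rwa [h, one_smul] at hprod
      · right; rwa [h, neg_smul, one_smul] at hprod
    have hTsq : ∀ M ∈ T, M * M = 1 := fun M hM => hsqFA M (hTsubA M hM)
    have hlam_mul : ∀ M ∈ T, ∀ N ∈ T, lam (M * N) = lam M * lam N := by
      intro M hM N hN
      have hprod : (lam M * lam N) • (M * N) ∈ FB := by
        have := hmulFB _ (hlam_mem M hM) _ (hlam_mem N hN)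
        rwa [Matrix.smul_mul, Matrix.mul_smul, smul_smul] at this
      exact huniq (M * N) (hmulFA M (hTsubA M hM) N (hTsubA N hN)) _ _
        (hlam_pm (M * N)) (pm_mul (hlam_pm M) (hlam_pm N))
        (hlam_mem _ (hTmul M hM N hN)) hprod
    have hηmul : ∀ M ∈ T, ∀ N ∈ T,
        (fun M => chi a i M * (chi b j (lam M • M) * lam M)) (M * N)
        = (fun M => chi a i M * (chi b j (lam M • M) * lam M)) M
          * (fun M => chi a i M * (chi b j (lam M • M) * lam M)) N := by
      intro M hM N hN
      simp only
      rw [chiMulA i M (hTsubA M hM) N (hTsubA N hN)]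
      rw [hlam_mul M hM N hN]
      have hsmul : (lam M * lam N) • (M * N) = (lam M • M) * (lam N • N) := by
        rw [Matrix.smul_mul, Matrix.mul_smul, smul_smul]
      rw [hsmul, chiMulB j _ (hlam_mem M hM) _ (hlam_mem N hN)]
      ring
    have hηpm : ∀ M ∈ T, (fun M => chi a i M * (chi b j (lam M • M) * lam M)) M = 1 ∨
        (fun M => chi a i M * (chi b j (lam M • M) * lam M)) M = -1 := by
      intro M hM
      exact pm_mul (chiPMA i M (hTsubA M hM))
        (pm_mul (chiPMB j _ (hlam_mem M hM)) (hlam_pm M))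
    rcases char_sum_cases hTmul hTsq hηmul hηpm with ⟨_, hval⟩ | h0
    · right
      rw [hval] at h2
      have hcc : (Complex.normSq (qinner (b j) (a i)) : ℂ) = (T.card : ℂ) / 2 ^ n := by
        field_simp at h2 ⊢
        linear_combination h2
      have := congrArg Complex.re hcc
      rw [Complex.ofReal_re] at this
      rw [this]
      rw [show ((T.card : ℂ) / 2 ^ n) = (((T.card : ℝ) / 2 ^ n : ℝ) : ℂ) by push_cast; ring]
      rw [Complex.ofReal_re]
    · left
      rw [h0] at h2
      have : (Complex.normSq (qinner (b j) (a i)) : ℂ) = 0 := by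
        have := mul_left_cancel₀ (two_pow_ne' n) (h2.trans (mul_zero ((2:ℂ)^n)).symm)
        exact this
      exact_mod_cast this
  have hpos : 0 < (T.card : ℝ) / 2 ^ n := by
    have hq : qinner (b (fun _ => 0)) (b (fun _ => 0)) = 1 := qinner_self hbb.1 _
    have hpar := parseval hba.1 (b (fun _ => 0)) hq
    have hex : ∃ i, Complex.normSq (qinner (b (fun _ => 0)) (a i)) ≠ 0 := by
      by_contra hall
      push_neg at hall
      rw [Finset.sum_congr rfl (fun i _ => by rw [prob_outer, hall i])] at hpar
      simp at hpar
    obtain ⟨i, hi⟩ := hex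
    rcases hval i (fun _ => 0) with h|h
    · exact absurd h hi
    · have h1 : 0 ≤ (T.card : ℝ) / 2 ^ n := h ▸ Complex.normSq_nonneg _
      have h2 : (T.card : ℝ) / 2 ^ n ≠ 0 := h ▸ hi
      exact lt_of_le_of_ne h1 (Ne.symm h2)
  exact ⟨(T.card : ℝ) / 2 ^ n, hpos, hval⟩

lemma normSq_swap (u v : d → ℂ) : Complex.normSq (qinner u v) = Complex.normSq (qinner v u) := by
  rw [← Complex.normSq_conj, qinner_conj]

lemma entropy_const {ι : Type*} [Fintype ι] (p : ι → ℝ) (c : ℝ) (hsum : ∑ i, p i = 1)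
    (hp : ∀ i, p i = 0 ∨ p i = c) :
    -∑ i, p i * Real.logb 2 (p i) = -Real.logb 2 c := by
  have h : ∀ i, p i * Real.logb 2 (p i) = p i * Real.logb 2 c := by
    intro i
    rcases hp i with h|h <;> rw [h]
    simp
  rw [Finset.sum_congr rfl (fun i _ => h i), ← Finset.sum_mul, hsum, one_mul]

lemma entropy_zero {v : d → d → ℂ} (hv : OrthonormalFamily v) (k : d) :
    shannonEntropy v (outer (v k)) = 0 := by
  rw [shannonEntropy, neg_eq_zero]
  apply Finset.sum_eq_zero
  intro i _
  rw [prob_outer, hv k i]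
  by_cases h : k = i
  · rw [if_pos h]
    norm_num
  · rw [if_neg h]
    norm_num

lemma logb_sqrt {c : ℝ} (hc : 0 ≤ c) : Real.logb 2 (Real.sqrt c) = Real.logb 2 c / 2 := by
  rw [Real.logb, Real.logb, Real.log_sqrt hc]
  ring

lemma sup_eq [Nonempty d] {a b : d → d → ℂ} {c : ℝ} (hc : 0 < c)
    (hconst : ∀ i j, Complex.normSq (qinner (b j) (a i)) = 0 ∨
      Complex.normSq (qinner (b j) (a i)) = c)
    {i₀ j₀ : d} (hex : Complex.normSq (qinner (b j₀) (a i₀)) = c) :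
    (⨆ i, ⨆ j, ‖qinner (a i) (b j)‖) = Real.sqrt c := by
  have habs : ∀ i j, ‖qinner (a i) (b j)‖
      = Real.sqrt (Complex.normSq (qinner (b j) (a i))) := by
    intro i j
    rw [Complex.norm_def, normSq_swap]
  apply le_antisymm
  · apply ciSup_le
    intro i
    apply ciSup_le
    intro j
    rw [habs]
    rcases hconst i j with h|h
    · rw [h, Real.sqrt_zero]
      exact Real.sqrt_nonneg c
    · rw [h]
  · have h1 : Real.sqrt c = ‖qinner (a i₀) (b j₀)‖ := by rw [habs, hex]
    rw [h1]
    have hb1 : BddAbove (Set.range fun j => ‖qinner (a i₀) (b j)‖) :=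
      Set.Finite.bddAbove (Set.finite_range _)
    have hb2 : BddAbove (Set.range fun i => ⨆ j, ‖qinner (a i) (b j)‖) :=
      Set.Finite.bddAbove (Set.finite_range _)
    exact le_trans (le_ciSup hb1 j₀) (le_ciSup hb2 i₀)

end St

theorem stmt2 {n : ℕ} (a b : (Fin n → Fin 2) → (Fin n → Fin 2) → ℂ)
    (ha : IsStabilizerBasis n a) (hb : IsStabilizerBasis n b) :
    (∀ j₀, (1 / 2) * (shannonEntropy a (outer (b j₀)) + shannonEntropy b (outer (b j₀)))
        = - Real.logb 2 (⨆ i, ⨆ j, ‖qinner (a i) (b j)‖)) ∧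
    (∀ i₀, (1 / 2) * (shannonEntropy a (outer (a i₀)) + shannonEntropy b (outer (a i₀)))
        = - Real.logb 2 (⨆ i, ⨆ j, ‖qinner (a i) (b j)‖)) := by
  classical
  obtain ⟨SA, hSA, hba⟩ := ha
  obtain ⟨SB, hSB, hbb⟩ := hb
  obtain ⟨c, hc, hconst⟩ := St.overlap_const hSA hSB hba hbb
  have hex : ∃ i, Complex.normSq (qinner (b (fun _ => 0)) (a i)) = c := by
    have hpar := St.parseval hba.1 (b (fun _ => 0)) (St.qinner_self hbb.1 _)
    by_contra hall
    push_neg at hall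
    have hz : ∀ i, Complex.normSq (qinner (b (fun _ => 0)) (a i)) = 0 := fun i =>
      (hconst i (fun _ => 0)).resolve_right (hall i)
    rw [Finset.sum_congr rfl (fun i _ => by rw [St.prob_outer, hz i])] at hpar
    simp at hpar
  obtain ⟨i₁, hi₁⟩ := hex
  have hsup : (⨆ i, ⨆ j, ‖qinner (a i) (b j)‖) = Real.sqrt c :=
    St.sup_eq hc hconst hi₁
  constructor
  · intro j₀
    have hSb : shannonEntropy b (outer (b j₀)) = 0 := St.entropy_zero hbb.1 j₀
    have hSa : shannonEntropy a (outer (b j₀)) = -Real.logb 2 c := by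
      have hp : ∀ i, prob (a i) (outer (b j₀)) = 0 ∨ prob (a i) (outer (b j₀)) = c := by
        intro i
        rw [St.prob_outer]
        exact hconst i j₀
      exact St.entropy_const _ c (St.parseval hba.1 _ (St.qinner_self hbb.1 j₀)) hp
    rw [hSa, hSb, hsup, St.logb_sqrt hc.le]
    ring
  · intro i₀
    have hSa : shannonEntropy a (outer (a i₀)) = 0 := St.entropy_zero hba.1 i₀
    have hSb : shannonEntropy b (outer (a i₀)) = -Real.logb 2 c := by
      have hp : ∀ j, prob (b j) (outer (a i₀)) = 0 ∨ prob (b j) (outer (a i₀)) = c := by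
        intro j
        rw [St.prob_outer, St.normSq_swap]
        exact hconst i₀ j
      exact St.entropy_const _ c (St.parseval hbb.1 _ (St.qinner_self hba.1 i₀)) hp
    rw [hSa, hSb, hsup, St.logb_sqrt hc.le]
    ring
end
end

section
/- Let A₁, …, A_L be observables on a finite-dimensional complex Hilbert space which anticommute pairwise (A_k A_ℓ + A_ℓ A_k = 0 for k ≠ ℓ) and satisfy A_k² = 𝟙. Then for every density operator ρ, Σ_{k=1}^L (tr(A_k ρ))² ≤ 1; equivalently, Σ_{k=1}^L Δ²(A_k) ≥ L − 1, where Δ²(A) = tr(A²ρ) − (tr(Aρ))² is the variance. -/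
/-!
STATEMENT 3: For pairwise anticommuting observables A₁,…,A_L with A_k² = 𝟙 on a
finite-dimensional complex Hilbert space and any density operator ρ:
Σ_k (tr(A_k ρ))² ≤ 1, equivalently Σ_k Δ²(A_k) ≥ L − 1, where
Δ²(A) = tr(A²ρ) − (tr(Aρ))².
-/

open scoped ComplexOrder

open Matrix


lemma psd_trace_nonneg {d : Type*} [Fintype d] [DecidableEq d] {M : Matrix d d ℂ}
    (hM : M.PosSemidef) : 0 ≤ M.trace := by
  rw [Matrix.trace]
  apply Finset.sum_nonneg
  intro i _
  exact hM.diag_nonneg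

open scoped MatrixOrder in
lemma trace_mul_psd_nonneg {d : Type*} [Fintype d] [DecidableEq d]
    {M ρ : Matrix d d ℂ} (hM : M.PosSemidef) (hρ : ρ.PosSemidef) :
    0 ≤ (M * ρ).trace := by
  have h1 : (CFC.sqrt ρ * M * CFC.sqrt ρ).trace = (M * ρ).trace := by
    rw [Matrix.trace_mul_cycle, CFC.sqrt_mul_sqrt_self ρ hρ.nonneg, Matrix.trace_mul_comm]
  rw [← h1]
  have : (CFC.sqrt ρ * M * CFC.sqrt ρ).PosSemidef := by
    have := hM.mul_mul_conjTranspose_same (CFC.sqrt ρ)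
    rwa [(CFC.sqrt_nonneg ρ).posSemidef.isHermitian.eq] at this
  exact psd_trace_nonneg this

theorem stmt3 {d : Type*} [Fintype d] [DecidableEq d] {L : ℕ}
    (A : Fin L → Matrix d d ℂ)
    (hherm : ∀ k, (A k).IsHermitian)
    (hsq : ∀ k, A k * A k = 1)
    (hanti : ∀ k l, k ≠ l → A k * A l + A l * A k = 0)
    (ρ : Matrix d d ℂ) (hρ : ρ.PosSemidef) (htr : ρ.trace = 1) :
    (∑ k, ((A k * ρ).trace.re) ^ 2 ≤ 1) ∧
    ((L : ℝ) - 1 ≤ ∑ k, (((A k * A k) * ρ).trace.re - ((A k * ρ).trace.re) ^ 2)) := by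
  set t : Fin L → ℝ := fun k => ((A k * ρ).trace).re with ht
  -- traces are real
  have hreal : ∀ k, (A k * ρ).trace = (t k : ℂ) := by
    intro k
    have hconj : (starRingEnd ℂ) ((A k * ρ).trace) = (A k * ρ).trace := by
      have : ((A k * ρ)ᴴ).trace = star ((A k * ρ).trace) := Matrix.trace_conjTranspose _
      rw [Matrix.conjTranspose_mul, (hherm k).eq, hρ.isHermitian.eq,
        Matrix.trace_mul_comm] at this
      simpa using this.symm
    exact (Complex.conj_eq_iff_re.mp hconj).symm
  set s : ℝ := ∑ k, t k ^ 2 with hs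
  have hsnn : 0 ≤ s := Finset.sum_nonneg fun k _ => sq_nonneg _
  set B : Matrix d d ℂ := ∑ k, (t k : ℂ) • A k with hB
  have hBherm : Bᴴ = B := by
    simp only [hB, Matrix.conjTranspose_sum, Matrix.conjTranspose_smul]
    refine Finset.sum_congr rfl fun k _ => ?_
    rw [(hherm k).eq]
    simp [Complex.star_def, Complex.conj_ofReal]
  -- B * B = s • 1
  have hBB : B * B = (s : ℂ) • 1 := by
    have expand : B * B = ∑ k, ∑ l, ((t k : ℂ) * (t l : ℂ)) • (A k * A l) := by
      rw [hB, Finset.sum_mul]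
      refine Finset.sum_congr rfl fun k _ => ?_
      rw [Finset.mul_sum]
      refine Finset.sum_congr rfl fun l _ => ?_
      rw [Matrix.smul_mul, Matrix.mul_smul, smul_smul]
    have h2 : B * B + B * B = ((2 * s : ℝ) : ℂ) • 1 := by
      nth_rewrite 2 [expand]
      rw [expand]
      nth_rewrite 2 [Finset.sum_comm]
      rw [← Finset.sum_add_distrib]
      have : ∀ k ∈ Finset.univ, (∑ l, ((t k : ℂ) * (t l : ℂ)) • (A k * A l)
          + ∑ l, ((t l : ℂ) * (t k : ℂ)) • (A l * A k))
          = ((2 : ℂ) * (t k : ℂ) ^ 2) • 1 := by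
        intro k _
        rw [← Finset.sum_add_distrib]
        rw [Finset.sum_eq_single k]
        · rw [hsq k, ← add_smul]; ring_nf
        · intro l _ hlk
          rw [mul_comm ((t l : ℂ)) ((t k : ℂ)), ← smul_add, hanti k l (Ne.symm hlk)]
          simp
        · simp
      rw [Finset.sum_congr rfl this, ← Finset.sum_smul]
      congr 1
      rw [hs]
      push_cast
      rw [Finset.mul_sum]
    have h3 : (2 : ℂ) • (B * B) = (2 : ℂ) • ((s : ℂ) • (1 : Matrix d d ℂ)) := by
      rw [two_smul, h2, smul_smul]
      push_cast
      ring_nf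
    exact smul_right_injective (Matrix d d ℂ) two_ne_zero h3
  -- trace of B * ρ
  have htrB : (B * ρ).trace = (s : ℂ) := by
    rw [hB, Finset.sum_mul, Matrix.trace_sum]
    simp only [Matrix.smul_mul, Matrix.trace_smul, hreal, smul_eq_mul]
    rw [hs]
    push_cast
    refine Finset.sum_congr rfl fun k _ => ?_
    ring
  -- the shifted operator
  set C : Matrix d d ℂ := B - (s : ℂ) • 1 with hC
  have hCherm : Cᴴ = C := by
    rw [hC, Matrix.conjTranspose_sub, hBherm, Matrix.conjTranspose_smul]
    norm_num
  have hCpsd : (C * C).PosSemidef := by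
    have := Matrix.posSemidef_conjTranspose_mul_self C
    rwa [hCherm] at this
  have hCCe : C * C = ((s + s ^ 2 : ℝ) : ℂ) • (1 : Matrix d d ℂ) - ((2 * s : ℝ) : ℂ) • B := by
    simp only [hC, Matrix.sub_mul, Matrix.mul_sub, Matrix.smul_mul, Matrix.mul_smul,
      smul_smul, hBB, Matrix.mul_one, Matrix.one_mul]
    push_cast
    module
  have hCC : ((C * C) * ρ).trace = ((s - s ^ 2 : ℝ) : ℂ) := by
    rw [hCCe, Matrix.sub_mul, Matrix.smul_mul, Matrix.smul_mul, Matrix.one_mul,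
      Matrix.trace_sub, Matrix.trace_smul, Matrix.trace_smul, htr, htrB,
      smul_eq_mul, smul_eq_mul]
    push_cast
    ring
  have hnn : (0 : ℂ) ≤ ((s - s ^ 2 : ℝ) : ℂ) := by
    rw [← hCC]; exact trace_mul_psd_nonneg hCpsd hρ
  have hnnR : (0 : ℝ) ≤ s - s ^ 2 := by
    exact_mod_cast hnn
  have hs1 : s ≤ 1 := by nlinarith [sq_nonneg (s - 1)]
  constructor
  · exact hs1
  · have h1 : ∀ k, ((A k * A k) * ρ).trace.re = 1 := by
      intro k
      rw [hsq k, Matrix.one_mul, htr]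
      simp
    have : ∑ k, (((A k * A k) * ρ).trace.re - t k ^ 2) = (L : ℝ) - s := by
      rw [Finset.sum_sub_distrib, Finset.sum_congr rfl (fun k _ => h1 k), hs]
      simp
    rw [this]
    linarith
end

section
/- Let S and T be n-qubit stabilizer groups and let t ∈ T be such that t ∉ S and −t ∉ S. Then there exists s ∈ S with ts = −st, i.e., every element of T not contained in S (up to sign) anticommutes with at least one element of S. -/
/-!
STATEMENT 9: If S and T are n-qubit stabilizer groups and t ∈ T is such that t ∉ S and
−t ∉ S, then there exists s ∈ S with ts = −st.
-/

noncomputable section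

/-! ### Auxiliary lemmas -/

/-- Shorthand: `P` is a local Pauli matrix. -/
abbrev LP (P : Matrix (Fin 2) (Fin 2) ℂ) : Prop := P = 1 ∨ P = sx ∨ P = sy ∨ P = sz

lemma hI4 : Complex.I ^ 4 = 1 := by simp [pow_succ, Complex.I_mul_I]

lemma hnI4 : (-Complex.I) ^ 4 = 1 := by rw [neg_pow]; norm_num [hI4]

lemma phase4 {c : ℂ} (h : c = 1 ∨ c = -1 ∨ c = Complex.I ∨ c = -Complex.I) : c ^ 4 = 1 := by
  rcases h with rfl|rfl|rfl|rfl
  · norm_num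
  · norm_num
  · exact hI4
  · exact hnI4

lemma phase_of4 {c : ℂ} (h : c ^ 4 = 1) :
    c = 1 ∨ c = -1 ∨ c = Complex.I ∨ c = -Complex.I := by
  have h2 : (c - 1) * (c + 1) * (c - Complex.I) * (c + Complex.I) = 0 := by
    linear_combination h + (1 - c ^ 2) * Complex.I_sq
  rcases mul_eq_zero.mp h2 with h3 | h3
  · rcases mul_eq_zero.mp h3 with h4 | h4
    · rcases mul_eq_zero.mp h4 with h5 | h5
      · exact Or.inl (sub_eq_zero.mp h5)
      · exact Or.inr (Or.inl (by linear_combination h5))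
    · exact Or.inr (Or.inr (Or.inl (sub_eq_zero.mp h4)))
  · exact Or.inr (Or.inr (Or.inr (by linear_combination h3)))

lemma lp_sq {P} (hP : LP P) : P * P = 1 := by
  rcases hP with rfl|rfl|rfl|rfl <;>
    first
    | simp
    | (ext i j; fin_cases i <;> fin_cases j <;>
        simp [sx, sy, sz, Matrix.mul_apply, Fin.sum_univ_two, Matrix.one_apply])

lemma lp_comm {P Q} (hP : LP P) (hQ : LP Q) :
    ∃ ε : ℂ, ε * ε = 1 ∧ P * Q = ε • (Q * P) := by
  rcases hP with rfl|rfl|rfl|rfl <;> rcases hQ with rfl|rfl|rfl|rfl <;>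
    first
    | (refine ⟨1, by norm_num, ?_⟩; simp; done)
    | (refine ⟨-1, by norm_num, ?_⟩
       ext i j; fin_cases i <;> fin_cases j <;>
         simp [sx, sy, sz, Matrix.mul_apply, Fin.sum_univ_two] <;> ring)

lemma lp_mul {P Q} (hP : LP P) (hQ : LP Q) :
    ∃ (ε : ℂ) (R : Matrix (Fin 2) (Fin 2) ℂ), ε ^ 4 = 1 ∧ LP R ∧ P * Q = ε • R := by
  rcases hP with rfl|rfl|rfl|rfl <;> rcases hQ with rfl|rfl|rfl|rfl
  · exact ⟨1, 1, by norm_num, Or.inl rfl, by simp⟩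
  · exact ⟨1, sx, by norm_num, Or.inr (Or.inl rfl), by simp⟩
  · exact ⟨1, sy, by norm_num, Or.inr (Or.inr (Or.inl rfl)), by simp⟩
  · exact ⟨1, sz, by norm_num, Or.inr (Or.inr (Or.inr rfl)), by simp⟩
  · exact ⟨1, sx, by norm_num, Or.inr (Or.inl rfl), by simp⟩
  · exact ⟨1, 1, by norm_num, Or.inl rfl, by rw [lp_sq (Or.inr (Or.inl rfl))]; simp⟩
  · exact ⟨Complex.I, sz, hI4, Or.inr (Or.inr (Or.inr rfl)), by
      ext i j; fin_cases i <;> fin_cases j <;>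
        simp [sx, sy, sz, Matrix.mul_apply, Fin.sum_univ_two] <;> ring⟩
  · exact ⟨-Complex.I, sy, hnI4, Or.inr (Or.inr (Or.inl rfl)), by
      ext i j; fin_cases i <;> fin_cases j <;>
        simp [sx, sy, sz, Matrix.mul_apply, Fin.sum_univ_two] <;> ring⟩
  · exact ⟨1, sy, by norm_num, Or.inr (Or.inr (Or.inl rfl)), by simp⟩
  · exact ⟨-Complex.I, sz, hnI4, Or.inr (Or.inr (Or.inr rfl)), by
      ext i j; fin_cases i <;> fin_cases j <;>
        simp [sx, sy, sz, Matrix.mul_apply, Fin.sum_univ_two] <;> ring⟩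
  · exact ⟨1, 1, by norm_num, Or.inl rfl, by rw [lp_sq (Or.inr (Or.inr (Or.inl rfl)))]; simp⟩
  · exact ⟨Complex.I, sx, hI4, Or.inr (Or.inl rfl), by
      ext i j; fin_cases i <;> fin_cases j <;>
        simp [sx, sy, sz, Matrix.mul_apply, Fin.sum_univ_two] <;> ring⟩
  · exact ⟨1, sz, by norm_num, Or.inr (Or.inr (Or.inr rfl)), by simp⟩
  · exact ⟨Complex.I, sy, hI4, Or.inr (Or.inr (Or.inl rfl)), by
      ext i j; fin_cases i <;> fin_cases j <;>
        simp [sx, sy, sz, Matrix.mul_apply, Fin.sum_univ_two] <;> ring⟩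
  · exact ⟨-Complex.I, sx, hnI4, Or.inr (Or.inl rfl), by
      ext i j; fin_cases i <;> fin_cases j <;>
        simp [sx, sy, sz, Matrix.mul_apply, Fin.sum_univ_two] <;> ring⟩
  · exact ⟨1, 1, by norm_num, Or.inl rfl, by rw [lp_sq (Or.inr (Or.inr (Or.inr rfl)))]; simp⟩

lemma lp_trace_ne {P} (hP : LP P) (h : P ≠ 1) : P.trace = 0 := by
  rcases hP with rfl|rfl|rfl|rfl
  · exact absurd rfl h
  · simp [sx, Matrix.trace_fin_two_of]
  · simp [sy, Matrix.trace_fin_two_of]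
  · simp [sz, Matrix.trace_fin_two_of]

lemma tensor_mul {n : ℕ} (P Q : Fin n → Matrix (Fin 2) (Fin 2) ℂ) :
    (Matrix.of fun x y : Fin n → Fin 2 => ∏ j, P j (x j) (y j)) *
      (Matrix.of fun x y => ∏ j, Q j (x j) (y j))
    = Matrix.of fun x y => ∏ j, (P j * Q j) (x j) (y j) := by
  ext x y
  simp only [Matrix.mul_apply, Matrix.of_apply]
  conv_rhs => rw [Finset.prod_univ_sum]
  rw [Fintype.piFinset_univ]
  exact Finset.sum_congr rfl fun z _ => (Finset.prod_mul_distrib).symm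

lemma tensor_trace {n : ℕ} (P : Fin n → Matrix (Fin 2) (Fin 2) ℂ) :
    (Matrix.of fun x y : Fin n → Fin 2 => ∏ j, P j (x j) (y j)).trace
    = ∏ j, (P j).trace := by
  simp only [Matrix.trace, Matrix.diag_apply, Matrix.of_apply]
  conv_rhs => rw [Finset.prod_univ_sum]
  rw [Fintype.piFinset_univ]

lemma tensor_one {n : ℕ} :
    (Matrix.of fun x y : Fin n → Fin 2 => ∏ j, (1 : Matrix (Fin 2) (Fin 2) ℂ) (x j) (y j))
    = 1 := by
  ext x y
  simp [Matrix.one_apply, Finset.prod_boole, funext_iff]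

lemma tensor_smul {n : ℕ} (ε : Fin n → ℂ) (R : Fin n → Matrix (Fin 2) (Fin 2) ℂ) :
    (Matrix.of fun x y : Fin n → Fin 2 => ∏ j, (ε j • R j) (x j) (y j))
    = (∏ j, ε j) • Matrix.of fun x y => ∏ j, R j (x j) (y j) := by
  ext x y
  simp [Matrix.smul_apply, smul_eq_mul, Finset.prod_mul_distrib]

lemma IsPauli.mul {n : ℕ} {M N : Matrix (Fin n → Fin 2) (Fin n → Fin 2) ℂ}
    (hM : IsPauli n M) (hN : IsPauli n N) : IsPauli n (M * N) := by
  obtain ⟨c, P, hc, hP, rfl⟩ := hM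
  obtain ⟨d, Q, hd, hQ, rfl⟩ := hN
  choose ε R hε hR hPQ using fun j => lp_mul (hP j) (hQ j)
  refine ⟨c * d * ∏ j, ε j, R, ?_, hR, ?_⟩
  · apply phase_of4
    rw [mul_pow, mul_pow, phase4 hc, phase4 hd, ← Finset.prod_pow]
    simp [hε]
  · rw [smul_mul_assoc, mul_smul_comm, smul_smul, tensor_mul]
    simp only [hPQ]
    rw [tensor_smul, smul_smul, mul_assoc]

lemma pauli_comm {n : ℕ} {M N : Matrix (Fin n → Fin 2) (Fin n → Fin 2) ℂ}
    (hM : IsPauli n M) (hN : IsPauli n N) :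
    M * N = N * M ∨ M * N = -(N * M) := by
  obtain ⟨c, P, hc, hP, rfl⟩ := hM
  obtain ⟨d, Q, hd, hQ, rfl⟩ := hN
  choose ε hε hPQ using fun j => lp_comm (hP j) (hQ j)
  have hE : (∏ j, ε j) * (∏ j, ε j) = 1 := by
    rw [← Finset.prod_mul_distrib]; simp [hε]
  have main : (c • Matrix.of fun x y : Fin n → Fin 2 => ∏ j, P j (x j) (y j)) *
      (d • Matrix.of fun x y => ∏ j, Q j (x j) (y j))
      = (∏ j, ε j) • ((d • Matrix.of fun x y : Fin n → Fin 2 => ∏ j, Q j (x j) (y j)) *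
        (c • Matrix.of fun x y => ∏ j, P j (x j) (y j))) := by
    rw [smul_mul_assoc, mul_smul_comm, tensor_mul]
    rw [smul_mul_assoc, mul_smul_comm, tensor_mul]
    simp only [hPQ]
    rw [tensor_smul, smul_smul, smul_smul, smul_smul, smul_smul]
    congr 1
    ring
  rcases mul_self_eq_one_iff.mp hE with h1 | h1
  · left; rw [main, h1, one_smul]
  · right; rw [main, h1, neg_smul, one_smul]

lemma stab_sq {n : ℕ} {S : Set (Matrix (Fin n → Fin 2) (Fin n → Fin 2) ℂ)}
    (hS : IsStabilizerGroup n S) {s} (hs : s ∈ S) : s * s = 1 := by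
  obtain ⟨hPau, h1, hmul, hcomm, hcard, hneg⟩ := hS
  obtain ⟨c, P, hc, hP, hrep⟩ := hPau s hs
  have hss : s * s = (c * c) • 1 := by
    rw [hrep, smul_mul_assoc, mul_smul_comm, smul_smul, tensor_mul]
    congr 1
    have hp : ∀ j, P j * P j = 1 := fun j => lp_sq (hP j)
    simp only [hp]
    exact tensor_one
  have hmem : s * s ∈ S := hmul _ hs _ hs
  rcases hc with rfl|rfl|rfl|rfl
  · simpa using hss
  · rw [hss]; norm_num
  · exfalso; apply hneg
    have he : s * s = (-1 : Matrix (Fin n → Fin 2) (Fin n → Fin 2) ℂ) := by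
      rw [hss]; simp [Complex.I_mul_I]
    rwa [he] at hmem
  · exfalso; apply hneg
    have he : s * s = (-1 : Matrix (Fin n → Fin 2) (Fin n → Fin 2) ℂ) := by
      rw [hss]; simp [Complex.I_mul_I]
    rwa [he] at hmem

lemma stab_trace_s9 {n : ℕ} {S : Set (Matrix (Fin n → Fin 2) (Fin n → Fin 2) ℂ)}
    (hS : IsStabilizerGroup n S) {s} (hs : s ∈ S) (hne : s ≠ 1) : s.trace = 0 := by
  obtain ⟨c, P, hc, hP, hrep⟩ := hS.1 s hs
  by_cases hall : ∀ j, P j = 1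
  · exfalso
    have hs1 : s = c • 1 := by rw [hrep]; congr 1; simp only [hall]; exact tensor_one
    have hsq := stab_sq hS hs
    rw [hs1, smul_mul_assoc, mul_smul_comm, smul_smul, one_mul] at hsq
    have h0 := congrFun (congrFun hsq (fun _ => 0)) (fun _ => 0)
    simp only [Matrix.smul_apply, Matrix.one_apply_eq, smul_eq_mul, mul_one] at h0
    rcases mul_self_eq_one_iff.mp h0 with rfl | rfl
    · exact hne (by rw [hs1, one_smul])
    · apply hS.2.2.2.2.2
      have : s = -1 := by rw [hs1]; simp
      rwa [this] at hs
  · push_neg at hall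
    obtain ⟨j, hj⟩ := hall
    rw [hrep, Matrix.trace_smul, tensor_trace,
      Finset.prod_eq_zero (Finset.mem_univ j) (lp_trace_ne (hP j) hj)]
    simp

lemma trace_of_idem {m : Type} [Fintype m] [DecidableEq m] {e : Matrix m m ℂ}
    (h : e * e = e) : ∃ k : ℕ, e.trace = k := by
  have hf : (Matrix.toLin' e) ∘ₗ (Matrix.toLin' e) = Matrix.toLin' e := by
    rw [← Matrix.toLin'_mul, h]
  obtain ⟨p, hp⟩ := (LinearMap.isProj_iff_isIdempotentElem _).mpr hf
  refine ⟨Module.finrank ℂ p, ?_⟩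
  have htr := hp.trace
  rw [LinearMap.trace_eq_matrix_trace ℂ (Pi.basisFun ℂ m),
    LinearMap.toMatrix_eq_toMatrix', LinearMap.toMatrix'_toLin'] at htr
  exact htr

theorem stmt9 {n : ℕ} (S T : Set (Matrix (Fin n → Fin 2) (Fin n → Fin 2) ℂ))
    (hS : IsStabilizerGroup n S) (hT : IsStabilizerGroup n T)
    (t : Matrix (Fin n → Fin 2) (Fin n → Fin 2) ℂ)
    (ht : t ∈ T) (htS : t ∉ S) (htS' : -t ∉ S) :
    ∃ s ∈ S, t * s = -(s * t) := by
  by_contra hcon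
  push_neg at hcon
  have hcomm : ∀ s ∈ S, t * s = s * t := by
    intro s hs
    rcases pauli_comm (hT.1 t ht) (hS.1 s hs) with h | h
    · exact h
    · exact absurd h (hcon s hs)
  have htt : t * t = 1 := stab_sq hT ht
  have hfin : S.Finite := by
    by_contra hinf
    have := Set.Infinite.ncard hinf
    rw [hS.2.2.2.2.1] at this
    exact (pow_ne_zero n two_ne_zero) this
  classical
  set F := hfin.toFinset with hF
  have memF : ∀ {s}, s ∈ F ↔ s ∈ S := fun {s} => hfin.mem_toFinset
  have hcard : F.card = 2 ^ n := by
    rw [← Set.ncard_eq_toFinset_card S hfin, hS.2.2.2.2.1]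
  have h1F : (1 : Matrix (Fin n → Fin 2) (Fin n → Fin 2) ℂ) ∈ F := memF.mpr hS.2.1
  set Pi := ∑ s ∈ F, s with hPidef
  have key1 : ∀ s ∈ F, ∑ u ∈ F, s * u = Pi := by
    intro s hsF
    have hsS := memF.mp hsF
    refine Finset.sum_nbij' (fun u => s * u) (fun u => s * u) ?_ ?_ ?_ ?_ ?_
    · intro u hu; exact memF.mpr (hS.2.2.1 _ hsS _ (memF.mp hu))
    · intro u hu; exact memF.mpr (hS.2.2.1 _ hsS _ (memF.mp hu))
    · intro u _; show s * (s * u) = u; rw [← mul_assoc, stab_sq hS hsS, one_mul]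
    · intro u _; show s * (s * u) = u; rw [← mul_assoc, stab_sq hS hsS, one_mul]
    · intro u _; rfl
  have hPi2 : Pi * Pi = ((2 ^ n : ℕ) : ℂ) • Pi := by
    rw [hPidef, Finset.sum_mul]
    have step : ∀ s ∈ F, s * ∑ u ∈ F, u = ∑ u ∈ F, u := by
      intro s hs; rw [Finset.mul_sum]; exact key1 s hs
    rw [Finset.sum_congr rfl step, Finset.sum_const, hcard, Nat.cast_smul_eq_nsmul]
  have htPi : t * Pi = Pi * t := by
    rw [hPidef, Finset.mul_sum, Finset.sum_mul]
    exact Finset.sum_congr rfl fun s hs => hcomm s (memF.mp hs)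
  have htrPi : Pi.trace = ((2 ^ n : ℕ) : ℂ) := by
    rw [hPidef, Matrix.trace_sum, Finset.sum_eq_single_of_mem 1 h1F
      (fun s hs hne => stab_trace_s9 hS (memF.mp hs) hne), Matrix.trace_one]
    simp [Fintype.card_fun]
  have htrtPi : (t * Pi).trace = 0 := by
    rw [hPidef, Finset.mul_sum, Matrix.trace_sum]
    apply Finset.sum_eq_zero
    intro s hsF
    have hsS := memF.mp hsF
    by_contra htr
    obtain ⟨c, P, hc, hP, hrep⟩ := IsPauli.mul (hT.1 t ht) (hS.1 s hsS)
    have hall : ∀ j, P j = 1 := by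
      by_contra hj; push_neg at hj; obtain ⟨j, hj⟩ := hj
      apply htr
      rw [hrep, Matrix.trace_smul, tensor_trace,
        Finset.prod_eq_zero (Finset.mem_univ j) (lp_trace_ne (hP j) hj)]
      simp
    have hts1 : t * s = c • 1 := by
      rw [hrep]; congr 1; simp only [hall]; exact tensor_one
    have hsq : (t * s) * (t * s) = 1 := by
      have h1 : s * (t * s) = t * (s * s) := by
        rw [← mul_assoc, ← hcomm s hsS, mul_assoc]
      rw [mul_assoc, h1, stab_sq hS hsS, mul_one, htt]
    have hcc : c * c = 1 := by
      rw [hts1, smul_mul_assoc, mul_smul_comm, smul_smul, one_mul] at hsq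
      have h0 := congrFun (congrFun hsq (fun _ => 0)) (fun _ => 0)
      simpa [Matrix.smul_apply, Matrix.one_apply_eq] using h0
    have hts : t = c • s := by
      calc t = t * (s * s) := by rw [stab_sq hS hsS, mul_one]
      _ = (t * s) * s := by rw [mul_assoc]
      _ = c • s := by rw [hts1, smul_mul_assoc, one_mul]
    rcases mul_self_eq_one_iff.mp hcc with rfl | rfl
    · rw [one_smul] at hts; exact htS (hts ▸ hsS)
    · apply htS'
      have : -t = s := by rw [hts]; simp
      rwa [this]
  -- final counting contradiction
  set N : ℂ := ((2 ^ n : ℕ) : ℂ) with hNdef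
  have hN : N ≠ 0 := by
    rw [hNdef]; exact_mod_cast pow_ne_zero n (two_ne_zero)
  set e := (2 * N)⁻¹ • (Pi + t * Pi) with hedef
  have h2N : (2 * N) ≠ 0 := by
    simp [hN]
  have hq : (Pi + t * Pi) * (Pi + t * Pi) = (2 * N) • (Pi + t * Pi) := by
    have e1 : Pi * (t * Pi) = N • (t * Pi) := by
      rw [← mul_assoc, ← htPi, mul_assoc, hPi2, mul_smul_comm]
    have e2 : (t * Pi) * Pi = N • (t * Pi) := by
      rw [mul_assoc, hPi2, mul_smul_comm]
    have e3 : (t * Pi) * (t * Pi) = N • Pi := by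
      rw [mul_assoc, ← mul_assoc Pi t Pi, ← htPi, ← mul_assoc, ← mul_assoc, htt, one_mul,
        hPi2]
    rw [add_mul, mul_add, mul_add, hPi2, e1, e2, e3]
    rw [smul_add]
    module
  have he : e * e = e := by
    rw [hedef, smul_mul_assoc, mul_smul_comm, smul_smul, hq, smul_smul]
    congr 1
    field_simp
  have htre : e.trace = 2⁻¹ := by
    rw [hedef, Matrix.trace_smul, Matrix.trace_add, htrPi, htrtPi, add_zero]
    field_simp [hN]
    ring_nf; exact mul_inv_cancel₀ hN
  obtain ⟨k, hk⟩ := trace_of_idem he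
  rw [htre] at hk
  have h2k : ((2 * k : ℕ) : ℂ) = ((1 : ℕ) : ℂ) := by
    push_cast
    rw [← hk]
    norm_num
  have := Nat.cast_inj (R := ℂ) |>.mp h2k
  omega
end
end

section
/- Let S and T be two distinct n-qubit stabilizer groups, where two Pauli operators differing only by a minus sign are identified, and let M = (S∖T) ∪ (T∖S) be their symmetric difference. Then M can be partitioned into two-element subsets {A, B} with AB = −BA, i.e., M can be divided into anticommuting pairs of operators. -/
/-!
STATEMENT 10: Let S and T be two distinct n-qubit stabilizer groups, identified up to an
overall minus sign, and let M = (S∖T) ∪ (T∖S) be their symmetric difference (up to sign;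
since −𝟙 is in no stabilizer group, each sign class occurring in M has exactly one
representative in M).  Then M can be partitioned into two-element subsets {A, B} with
AB = −BA.
-/

noncomputable section

/-- The symmetric difference of two stabilizer groups, with elements identified up to
sign: the elements of S not contained in T up to sign, together with the elements of T
not contained in S up to sign. -/
def symmDiffUpToSign (n : ℕ)
    (S T : Set (Matrix (Fin n → Fin 2) (Fin n → Fin 2) ℂ)) :
    Set (Matrix (Fin n → Fin 2) (Fin n → Fin 2) ℂ) :=
  {A | (A ∈ S ∧ A ∉ T ∧ -A ∉ T) ∨ (A ∈ T ∧ A ∉ S ∧ -A ∉ S)}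


namespace Stmt10Aux

variable {n : ℕ}

/-- sign character -/
def chi (a : ZMod 2) : ℂ := if a = 0 then 1 else -1

lemma zmod2_cases (a : ZMod 2) : a = 0 ∨ a = 1 := by revert a; decide

lemma chi_zero : chi 0 = 1 := rfl
lemma chi_one : chi 1 = -1 := rfl

lemma chi_ne_zero (a : ZMod 2) : chi a ≠ 0 := by
  rcases zmod2_cases a with h | h <;> subst h <;> simp [chi]

lemma chi_add (a b : ZMod 2) : chi (a + b) = chi a * chi b := by
  rcases zmod2_cases a with h | h <;> rcases zmod2_cases b with h' | h' <;>
    subst h <;> subst h' <;> simp [chi, (by decide : (1+1 : ZMod 2) = 0)]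

lemma chi_mul_self (a : ZMod 2) : chi a * chi a = 1 := by
  rcases zmod2_cases a with h | h <;> subst h <;> simp [chi]

lemma chi_eq_one_iff (a : ZMod 2) : chi a = 1 ↔ a = 0 := by
  rcases zmod2_cases a with h | h <;> subst h <;> simp [chi] <;> norm_num

lemma chi_eq_neg_one_iff (a : ZMod 2) : chi a = -1 ↔ a = 1 := by
  rcases zmod2_cases a with h | h <;> subst h <;> simp [chi] <;> norm_num

/-- equivalence `Fin 2 ≃ ZMod 2` -/
def iota : Fin 2 ≃ ZMod 2 where
  toFun t := (t.val : ZMod 2)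
  invFun a := if a = 0 then 0 else 1
  left_inv := by decide
  right_inv := by decide

def iotav : (Fin n → Fin 2) ≃ (Fin n → ZMod 2) :=
  Equiv.piCongrRight fun _ => iota

lemma chi_sum {m : Type*} (s : Finset m) (f : m → ZMod 2) :
    chi (∑ j ∈ s, f j) = ∏ j ∈ s, chi (f j) := by
  classical
  induction s using Finset.cons_induction with
  | empty => simp [chi_zero]
  | cons a s ha ih => rw [Finset.sum_cons, Finset.prod_cons, chi_add, ih]

end Stmt10Aux
namespace Stmt10Aux
open Matrix

variable {n : ℕ}

abbrev PM (n : ℕ) := Matrix (Fin n → Fin 2) (Fin n → Fin 2) ℂ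
abbrev F2 (n : ℕ) := (Fin n → ZMod 2) × (Fin n → ZMod 2)

/-- the Pauli-string matrix -/
def matP (v : F2 n) : PM n :=
  Matrix.of fun x y => if iotav y = iotav x + v.1 then chi (v.2 ⬝ᵥ iotav y) else 0

lemma zmod2_add_self (a : ZMod 2) : a + a = 0 := by revert a; decide

lemma pi_add_self (a : Fin n → ZMod 2) : a + a = 0 := by
  funext j; exact zmod2_add_self (a j)

lemma sum_collapse (F : (Fin n → ZMod 2) → ℂ) (c : Fin n → ZMod 2) :
    ∑ y : Fin n → Fin 2, (if iotav y = c then F (iotav y) else 0) = F c := by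
  rw [Fintype.sum_equiv iotav _ (fun z => if z = c then F z else 0) (fun y => rfl)]
  simp

lemma matP_mul (v w : F2 n) :
    matP v * matP w = chi (v.2 ⬝ᵥ w.1) • matP (v + w) := by
  ext x z
  rw [Matrix.mul_apply]
  simp only [matP, Matrix.of_apply, Matrix.smul_apply, smul_eq_mul]
  have step : ∀ y : Fin n → Fin 2,
      (if iotav y = iotav x + v.1 then chi (v.2 ⬝ᵥ iotav y) else 0) *
        (if iotav z = iotav y + w.1 then chi (w.2 ⬝ᵥ iotav z) else 0)
      = (if iotav y = iotav x + v.1 then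
          (fun t => chi (v.2 ⬝ᵥ t) * (if iotav z = t + w.1 then chi (w.2 ⬝ᵥ iotav z) else 0)) (iotav y)
        else 0) := by
    intro y; by_cases h : iotav y = iotav x + v.1 <;> simp [h]
  rw [Finset.sum_congr rfl fun y _ => step y,
    sum_collapse (fun t => chi (v.2 ⬝ᵥ t) * (if iotav z = t + w.1 then chi (w.2 ⬝ᵥ iotav z) else 0))
      (iotav x + v.1)]
  simp only [Prod.fst_add, Prod.snd_add]
  by_cases h : iotav z = iotav x + v.1 + w.1
  · have h' : iotav x + v.1 = iotav z + w.1 := by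
      rw [h]; rw [add_assoc, add_assoc, pi_add_self, add_zero]
    rw [if_pos h, if_pos (by rw [h, add_assoc])]
    rw [h']
    rw [dotProduct_add, add_dotProduct, chi_add, chi_add]
    ring
  · rw [if_neg h, if_neg (by rw [← add_assoc]; exact h), mul_zero]; ring

lemma matP_zero : matP (0 : F2 n) = 1 := by
  ext x y
  simp only [matP, Matrix.of_apply, Matrix.one_apply]
  have : iotav y = iotav x + (0 : F2 n).1 ↔ x = y := by
    simp only [Prod.fst_zero, add_zero]
    exact ⟨fun h => (iotav.injective h).symm, fun h => by rw [h]⟩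
  by_cases h : x = y
  · rw [if_pos (this.mpr h), if_pos h]; simp [chi_zero]
  · rw [if_neg (fun hh => h (this.mp hh)), if_neg h]

lemma matP_ne_zero (v : F2 n) : matP v ≠ 0 := by
  intro h
  have h2 : matP v (iotav.symm 0) (iotav.symm v.1) = 0 := by rw [h]; rfl
  rw [matP, Matrix.of_apply] at h2
  simp only [Equiv.apply_symm_apply, zero_add] at h2
  simp only [if_true, if_pos trivial] at h2
  exact chi_ne_zero _ h2

/-- symplectic form -/
def omg (v w : F2 n) : ZMod 2 := v.2 ⬝ᵥ w.1 + w.2 ⬝ᵥ v.1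

lemma omg_comm (v w : F2 n) : omg v w = omg w v := add_comm _ _

lemma matP_comm (v w : F2 n) :
    matP v * matP w = chi (omg v w) • (matP w * matP v) := by
  rw [matP_mul, matP_mul, smul_smul, add_comm w v, omg]
  congr 1
  rw [chi_add]
  have : chi (w.2 ⬝ᵥ v.1) * chi (w.2 ⬝ᵥ v.1) = 1 := chi_mul_self _
  calc chi (v.2 ⬝ᵥ w.1) = chi (v.2 ⬝ᵥ w.1) * (chi (w.2 ⬝ᵥ v.1) * chi (w.2 ⬝ᵥ v.1)) := by
        rw [this, mul_one]
    _ = chi (v.2 ⬝ᵥ w.1) * chi (w.2 ⬝ᵥ v.1) * chi (w.2 ⬝ᵥ v.1) := by ring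

end Stmt10Aux

namespace Stmt10Aux
open Matrix
variable {n : ℕ}

lemma chi_inj {a b : ZMod 2} (h : chi a = chi b) : a = b := by
  rcases zmod2_cases a with ha | ha <;> rcases zmod2_cases b with hb | hb <;>
    subst ha <;> subst hb <;> first | rfl | (exfalso; rw [chi_zero, chi_one] at h; norm_num at h)

lemma matP_entry (v : F2 n) (x y : Fin n → Fin 2) :
    matP v x y = if iotav y = iotav x + v.1 then chi (v.2 ⬝ᵥ iotav y) else 0 := rfl

lemma matP_smul_inj {c d : ℂ} {v w : F2 n} (hc : c ≠ 0)
    (h : c • matP v = d • matP w) : v = w ∧ c = d := by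
  have key : ∀ x y, c * matP v x y = d * matP w x y := by
    intro x y
    have := congrFun (congrFun h x) y
    simpa [Matrix.smul_apply, smul_eq_mul] using this
  -- step 1 : v.1 = w.1
  have h1 : v.1 = w.1 := by
    have k := key (iotav.symm 0) (iotav.symm v.1)
    rw [matP_entry, matP_entry] at k
    simp only [Equiv.apply_symm_apply] at k
    rw [if_pos (zero_add v.1).symm] at k
    by_contra hne
    rw [if_neg (by rw [zero_add]; exact hne), mul_zero] at k
    exact (mul_ne_zero hc (chi_ne_zero _)) k
  -- step 2 : for all z, c * chi (v.2 ⬝ᵥ z) = d * chi (w.2 ⬝ᵥ z)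
  have h2 : ∀ z : Fin n → ZMod 2, c * chi (v.2 ⬝ᵥ z) = d * chi (w.2 ⬝ᵥ z) := by
    intro z
    have k := key (iotav.symm (z + v.1)) (iotav.symm z)
    rw [matP_entry, matP_entry] at k
    simp only [Equiv.apply_symm_apply] at k
    have hcondv : z = z + v.1 + v.1 := by rw [add_assoc, pi_add_self, add_zero]
    rw [if_pos hcondv, if_pos (by rw [← h1]; exact hcondv)] at k
    exact k
  -- c = d
  have hcd : c = d := by
    have k := h2 0
    rw [dotProduct_zero, dotProduct_zero, chi_zero, mul_one, mul_one] at k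
    exact k
  subst hcd
  refine ⟨Prod.ext h1 ?_, rfl⟩
  funext j
  have k := h2 (Pi.single j 1)
  have k' : chi (v.2 ⬝ᵥ Pi.single j 1) = chi (w.2 ⬝ᵥ Pi.single j 1) :=
    mul_left_cancel₀ hc k
  have := chi_inj k'
  rwa [dotProduct_single, dotProduct_single, mul_one, mul_one] at this

end Stmt10Aux
namespace Stmt10Aux
open Matrix
variable {n : ℕ}

lemma iotav_apply (y : Fin n → Fin 2) (j : Fin n) : iotav y j = iota (y j) := rfl

lemma single_decomp (Q : Matrix (Fin 2) (Fin 2) ℂ)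
    (hQ : Q = 1 ∨ Q = sx ∨ Q = sy ∨ Q = sz) :
    ∃ (e : ℂ) (a b : ZMod 2), e ≠ 0 ∧ e ^ 4 = 1 ∧
      ∀ x y : Fin 2, Q x y = e * (if iota y = iota x + a then chi (b * iota y) else 0) := by
  have hI : (Complex.I : ℂ) ^ 4 = 1 := by
    rw [show (4:ℕ) = 2*2 from rfl, pow_mul, Complex.I_sq]; norm_num
  rcases hQ with h | h | h | h <;> subst h
  · exact ⟨1, 0, 0, one_ne_zero, one_pow 4, by
      intro x y; fin_cases x <;> fin_cases y <;>
        simp (config := { decide := true }) [Matrix.one_apply, iota, chi] <;> norm_num⟩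
  · exact ⟨1, 1, 0, one_ne_zero, one_pow 4, by
      intro x y; fin_cases x <;> fin_cases y <;>
        simp (config := { decide := true }) [sx, iota, chi] <;> norm_num⟩
  · exact ⟨Complex.I, 1, 1, Complex.I_ne_zero, hI, by
      intro x y; fin_cases x <;> fin_cases y <;>
        simp (config := { decide := true }) [sy, iota, chi] <;> norm_num⟩
  · exact ⟨1, 0, 1, one_ne_zero, one_pow 4, by
      intro x y; fin_cases x <;> fin_cases y <;>
        simp (config := { decide := true }) [sz, iota, chi] <;> norm_num⟩

lemma isPauli_decomp {M : PM n} (h : IsPauli n M) :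
    ∃ (c : ℂ) (v : F2 n), c ≠ 0 ∧ c ^ 4 = 1 ∧ M = c • matP v := by
  obtain ⟨c, P, hc, hP, hM⟩ := h
  choose e a b he4 he1 hent using fun j => single_decomp (P j) (hP j)
  have hI : (Complex.I : ℂ) ^ 4 = 1 := by
    rw [show (4:ℕ) = 2*2 from rfl, pow_mul, Complex.I_sq]; norm_num
  have hc0 : c ≠ 0 ∧ c ^ 4 = 1 := by
    rcases hc with h | h | h | h <;> subst h
    · exact ⟨one_ne_zero, one_pow 4⟩
    · exact ⟨by norm_num, by norm_num⟩
    · exact ⟨Complex.I_ne_zero, hI⟩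
    · exact ⟨neg_ne_zero.mpr Complex.I_ne_zero, by rw [Even.neg_pow (by decide : Even 4)]; exact hI⟩
  refine ⟨c * ∏ j, e j, (a, b), mul_ne_zero hc0.1 (Finset.prod_ne_zero_iff.mpr fun j _ => he4 j),
    ?_, ?_⟩
  · rw [mul_pow, hc0.2, one_mul, ← Finset.prod_pow]
    exact Finset.prod_eq_one fun j _ => he1 j
  · rw [hM]
    ext x y
    simp only [Matrix.smul_apply, Matrix.of_apply, smul_eq_mul]
    rw [Finset.prod_congr rfl fun j _ => hent j (x j) (y j), Finset.prod_mul_distrib,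
      Fintype.prod_ite_zero, matP_entry]
    have hcond : (∀ j, iota (y j) = iota (x j) + a j) ↔ iotav y = iotav x + (a, b).1 := by
      constructor
      · intro hh; funext j; exact hh j
      · intro hh j; exact congrFun hh j
    by_cases hcnd : iotav y = iotav x + (a, b).1
    · rw [if_pos (hcond.mpr hcnd), if_pos hcnd, ← chi_sum]
      have hdp : (a, b).2 ⬝ᵥ iotav y = ∑ j, b j * iota (y j) := by
        simp [dotProduct, iotav_apply]
      rw [hdp]
      ring
    · rw [if_neg (fun hh => hcnd (hcond.mp hh)), if_neg hcnd]
      ring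

end Stmt10Aux

namespace Stmt10Aux
open Matrix
variable {n : ℕ}

lemma zmod2_add_eq_zero_iff (a b : ZMod 2) : a + b = 0 ↔ a = b := by revert a b; decide

lemma zmod2_add_eq_one_iff (a b : ZMod 2) : a + b = 1 ↔ a ≠ b := by revert a b; decide

lemma chi_eq_neg_chi_iff (a b : ZMod 2) : chi a = -chi b ↔ a ≠ b := by
  rcases zmod2_cases a with h | h <;> rcases zmod2_cases b with h' | h' <;>
    subst h <;> subst h' <;> simp [chi] <;> norm_num

lemma chi_eq_chi_iff (a b : ZMod 2) : chi a = chi b ↔ a = b :=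
  ⟨chi_inj, fun h => by rw [h]⟩

lemma prod_add_self (v : F2 n) : v + v = 0 := Prod.ext (pi_add_self _) (pi_add_self _)

lemma smul_matP_cancel {α β : ℂ} {u : F2 n} (h : α • matP u = β • matP u) : α = β := by
  have := congrFun (congrFun h (iotav.symm 0)) (iotav.symm u.1)
  simp only [Matrix.smul_apply, smul_eq_mul, matP_entry, Equiv.apply_symm_apply] at this
  rw [if_pos (zero_add u.1).symm] at this
  exact mul_right_cancel₀ (chi_ne_zero _) this

/-- product of two scaled Pauli strings -/
lemma smul_matP_mul (c d : ℂ) (v w : F2 n) :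
    (c • matP v) * (d • matP w) = (c * d * chi (v.2 ⬝ᵥ w.1)) • matP (v + w) := by
  rw [Matrix.smul_mul, Matrix.mul_smul, matP_mul, smul_smul, smul_smul, mul_assoc]

lemma comm_iff {c d : ℂ} (hc : c ≠ 0) (hd : d ≠ 0) (v w : F2 n) :
    (c • matP v) * (d • matP w) = (d • matP w) * (c • matP v) ↔ omg v w = 0 := by
  rw [smul_matP_mul, smul_matP_mul, mul_comm d c, add_comm w v]
  constructor
  · intro h
    have h2 := smul_matP_cancel h
    have h3 : chi (v.2 ⬝ᵥ w.1) = chi (w.2 ⬝ᵥ v.1) :=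
      mul_left_cancel₀ (mul_ne_zero hc hd) h2
    rw [omg, zmod2_add_eq_zero_iff]
    exact chi_inj h3
  · intro h
    rw [omg, zmod2_add_eq_zero_iff] at h
    rw [h]

lemma anticomm_iff {c d : ℂ} (hc : c ≠ 0) (hd : d ≠ 0) (v w : F2 n) :
    (c • matP v) * (d • matP w) = -((d • matP w) * (c • matP v)) ↔ omg v w = 1 := by
  rw [smul_matP_mul, smul_matP_mul, mul_comm d c, add_comm w v, ← neg_smul]
  constructor
  · intro h
    have h2 := smul_matP_cancel h
    have h3 : chi (v.2 ⬝ᵥ w.1) = -chi (w.2 ⬝ᵥ v.1) := by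
      apply mul_left_cancel₀ (mul_ne_zero hc hd)
      rw [h2]; ring
    rw [omg, zmod2_add_eq_one_iff]
    exact (chi_eq_neg_chi_iff _ _).mp h3
  · intro h
    rw [omg, zmod2_add_eq_one_iff] at h
    rw [(chi_eq_neg_chi_iff _ _).mpr h]
    ring_nf

end Stmt10Aux
namespace Stmt10Aux
open Matrix
variable {n : ℕ}

open scoped Classical in
/-- string of a Pauli matrix -/
def strFn (A : PM n) : F2 n :=
  if h : ∃ (c : ℂ) (v : F2 n), c ≠ 0 ∧ A = c • matP v then h.choose_spec.choose else 0

lemma strFn_eq {A : PM n} {c : ℂ} {v : F2 n} (hc : c ≠ 0) (hA : A = c • matP v) :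
    strFn A = v := by
  have h : ∃ (c : ℂ) (v : F2 n), c ≠ 0 ∧ A = c • matP v := ⟨c, v, hc, hA⟩
  classical
  rw [strFn]
  rw [dif_pos h]
  obtain ⟨hc', hA'⟩ := h.choose_spec.choose_spec
  exact (matP_smul_inj hc' (hA' ▸ hA)).1

variable {S : Set (PM n)} (hS : IsStabilizerGroup n S)

/-- the underlying subgroup of `F2 n` -/
def Vset (S : Set (PM n)) : Set (F2 n) := {v | ∃ c : ℂ, c ≠ 0 ∧ c • matP v ∈ S}

section
include hS

lemma mem_decomp {A : PM n} (hA : A ∈ S) :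
    ∃ c : ℂ, c ≠ 0 ∧ c ^ 4 = 1 ∧ A = c • matP (strFn A) := by
  obtain ⟨c, v, hc, hc4, hAv⟩ := isPauli_decomp (hS.1 A hA)
  rw [strFn_eq hc hAv]
  exact ⟨c, hc, hc4, hAv⟩

lemma scalar_mem {μ : ℂ} (hμ : μ ^ 2 = 1) (h : μ • (1 : PM n) ∈ S) : μ = 1 := by
  have h2 : μ = 1 ∨ μ = -1 := by
    have : (μ - 1) * (μ + 1) = 0 := by ring_nf; rw [← hμ]; ring
    rcases mul_eq_zero.mp this with h | h
    · left; linear_combination h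
    · right; linear_combination h
  rcases h2 with h2 | h2
  · exact h2
  · exfalso
    rw [h2, neg_smul, one_smul] at h
    exact hS.2.2.2.2.2 h

lemma sq_one {A : PM n} (hA : A ∈ S) : A * A = 1 := by
  obtain ⟨c, hc, hc4, hAv⟩ := mem_decomp hS hA
  set v := strFn A
  have hmul : A * A = (c * c * chi (v.2 ⬝ᵥ v.1)) • (1 : PM n) := by
    rw [hAv, smul_matP_mul, prod_add_self, matP_zero]
  have hμ : (c * c * chi (v.2 ⬝ᵥ v.1)) ^ 2 = 1 := by
    have : (c * c * chi (v.2 ⬝ᵥ v.1)) ^ 2 = c ^ 4 * (chi (v.2 ⬝ᵥ v.1) * chi (v.2 ⬝ᵥ v.1)) := by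
      ring
    rw [this, hc4, chi_mul_self, mul_one]
  have := scalar_mem hS hμ (hmul ▸ hS.2.2.1 A hA A hA)
  rw [hmul, this, one_smul]

lemma sq_coeff {A : PM n} (hA : A ∈ S) {c : ℂ} {v : F2 n} (hc : c ≠ 0)
    (hAv : A = c • matP v) : c * c * chi (v.2 ⬝ᵥ v.1) = 1 := by
  have h1 : A * A = (c * c * chi (v.2 ⬝ᵥ v.1)) • (1 : PM n) := by
    rw [hAv, smul_matP_mul, prod_add_self, matP_zero]
  rw [sq_one hS hA] at h1
  have := congrFun (congrFun h1 (fun _ => 0)) (fun _ => 0)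
  simpa [Matrix.one_apply, Matrix.smul_apply] using this.symm

/-- two stabilizer elements with the same string are equal -/
lemma str_injOn : Set.InjOn strFn S := by
  intro A hA B hB hstr
  obtain ⟨c, hc, hc4, hAv⟩ := mem_decomp hS hA
  obtain ⟨d, hd, hd4, hBv⟩ := mem_decomp hS hB
  rw [hstr] at hAv
  set v := strFn B
  have hmul : A * B = (c * d * chi (v.2 ⬝ᵥ v.1)) • (1 : PM n) := by
    rw [hAv, hBv, smul_matP_mul, prod_add_self, matP_zero]
  have hcc := sq_coeff hS hA hc hAv
  have hdd := sq_coeff hS hB hd hBv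
  have hμ : (c * d * chi (v.2 ⬝ᵥ v.1)) ^ 2 = 1 := by
    have : (c * d * chi (v.2 ⬝ᵥ v.1)) ^ 2
        = (c * c * chi (v.2 ⬝ᵥ v.1)) * (d * d * chi (v.2 ⬝ᵥ v.1)) := by ring
    rw [this, hcc, hdd, mul_one]
  have hone := scalar_mem hS hμ (hmul ▸ hS.2.2.1 A hA B hB)
  rw [hone, one_smul] at hmul
  -- A * B = 1 and A * A = 1 gives A = B
  have hAA := sq_one hS hA
  calc A = A * 1 := (mul_one A).symm
    _ = A * (A * B) := by rw [hmul]
    _ = (A * A) * B := (mul_assoc A A B).symm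
    _ = B := by rw [hAA, one_mul]

lemma Vset_eq_image : Vset S = strFn '' S := by
  ext v
  constructor
  · rintro ⟨c, hc, hmem⟩
    exact ⟨c • matP v, hmem, strFn_eq hc rfl⟩
  · rintro ⟨A, hA, rfl⟩
    obtain ⟨c, hc, _, hAv⟩ := mem_decomp hS hA
    exact ⟨c, hc, hAv ▸ hA⟩

lemma Vset_ncard : (Vset S).ncard = 2 ^ n := by
  rw [Vset_eq_image hS, Set.ncard_image_of_injOn (str_injOn hS)]
  exact hS.2.2.2.2.1

lemma Vset_zero : (0 : F2 n) ∈ Vset S :=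
  ⟨1, one_ne_zero, by rw [matP_zero, one_smul]; exact hS.2.1⟩

lemma Vset_add {v w : F2 n} (hv : v ∈ Vset S) (hw : w ∈ Vset S) : v + w ∈ Vset S := by
  obtain ⟨c, hc, hcm⟩ := hv
  obtain ⟨d, hd, hdm⟩ := hw
  refine ⟨c * d * chi (v.2 ⬝ᵥ w.1), ?_, ?_⟩
  · exact mul_ne_zero (mul_ne_zero hc hd) (chi_ne_zero _)
  · rw [← smul_matP_mul]
    exact hS.2.2.1 _ hcm _ hdm

lemma Vset_isotropic {v w : F2 n} (hv : v ∈ Vset S) (hw : w ∈ Vset S) : omg v w = 0 := by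
  obtain ⟨c, hc, hcm⟩ := hv
  obtain ⟨d, hd, hdm⟩ := hw
  exact (comm_iff hc hd v w).mp (hS.2.2.2.1 _ hcm _ hdm)

end

/-- membership in T up to sign corresponds to string membership -/
lemma str_mem_Vset {T : Set (PM n)} (hT : IsStabilizerGroup n T)
    {A : PM n} {c : ℂ} {v : F2 n} (hc : c ≠ 0) (hc2 : c * c * chi (v.2 ⬝ᵥ v.1) = 1)
    (hAv : A = c • matP v) (hmem : v ∈ Vset T) : A ∈ T ∨ -A ∈ T := by
  obtain ⟨d, hd, hdm⟩ := hmem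
  have hd2 := sq_coeff hT hdm hd rfl
  -- c * c = d * d
  have hcd : c * c = d * d := by
    have hchi := chi_ne_zero (v.2 ⬝ᵥ v.1)
    field_simp at hc2 hd2 ⊢
    rw [← hd2] at hc2
    exact mul_right_cancel₀ hchi (hc2.trans (mul_comm _ _))
  have : c = d ∨ c = -d := by
    have : (c - d) * (c + d) = 0 := by ring_nf; linear_combination hcd
    rcases mul_eq_zero.mp this with h | h
    · left; linear_combination h
    · right; linear_combination h
  rcases this with h | h
  · left; rw [hAv, h]; exact hdm
  · right; rw [hAv, h, neg_smul, neg_neg]; exact hdm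

end Stmt10Aux
namespace Stmt10Aux
open Matrix Module
variable {n : ℕ}

/-- the symplectic (here: symmetric) bilinear form -/
def Bf : LinearMap.BilinForm (ZMod 2) (F2 n) :=
  LinearMap.mk₂ (ZMod 2) omg
    (by intro m1 m2 w; simp [omg, Prod.fst_add, Prod.snd_add, add_dotProduct,
          dotProduct_add]; ring)
    (by intro c m w; simp [omg, Prod.smul_fst, Prod.smul_snd, smul_dotProduct,
          dotProduct_smul, smul_eq_mul]; ring)
    (by intro m w1 w2; simp [omg, Prod.fst_add, Prod.snd_add, add_dotProduct,
          dotProduct_add]; ring)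
    (by intro c m w; simp [omg, Prod.smul_fst, Prod.smul_snd, smul_dotProduct,
          dotProduct_smul, smul_eq_mul]; ring)

lemma Bf_apply (v w : F2 n) : Bf v w = omg v w := rfl

lemma Bf_refl : (Bf (n := n)).IsRefl := by
  intro v w h
  rwa [Bf_apply, omg_comm] at h

lemma Bf_nondeg : (Bf (n := n)).Nondegenerate := by
  refine (LinearMap.IsRefl.nondegenerate_iff_separatingLeft Bf_refl).mpr ?_
  intro v hv
  have h1 : v.1 = 0 := by
    funext j
    have := hv (0, Pi.single j 1)
    rw [Bf_apply, omg] at this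
    simpa [dotProduct_zero, single_dotProduct] using this
  have h2 : v.2 = 0 := by
    funext j
    have := hv (Pi.single j 1, 0)
    rw [Bf_apply, omg] at this
    simpa [zero_dotProduct, dotProduct_single] using this
  exact Prod.ext h1 h2

lemma finrank_F2 : finrank (ZMod 2) (F2 n) = n + n := by
  rw [Module.finrank_prod, Module.finrank_pi, Fintype.card_fin]

lemma finrank_of_card (W : Submodule (ZMod 2) (F2 n)) (hcard : Nat.card W = 2 ^ n) :
    finrank (ZMod 2) W = n := by
  have : Nat.card W = 2 ^ finrank (ZMod 2) W := by
    classical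
    have := card_eq_pow_finrank (K := ZMod 2) (V := W)
    rw [Nat.card_eq_fintype_card, this, ZMod.card]
  rw [this] at hcard
  exact (Nat.pow_right_injective (le_refl 2) hcard.symm).symm

lemma max_isotropic (W : Submodule (ZMod 2) (F2 n)) (hcard : Nat.card W = 2 ^ n)
    (hiso : ∀ v ∈ W, ∀ w ∈ W, omg v w = 0)
    {u : F2 n} (hu : ∀ w ∈ W, omg u w = 0) : u ∈ W := by
  have hrank : finrank (ZMod 2) W = n := finrank_of_card W hcard
  have hle : W ≤ Bf.orthogonal W := by
    intro w hw
    rw [LinearMap.BilinForm.mem_orthogonal_iff]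
    intro x hx
    exact hiso x hx w hw
  have horth : W = Bf.orthogonal W := by
    refine Submodule.eq_of_le_of_finrank_le hle ?_
    rw [LinearMap.BilinForm.finrank_orthogonal Bf_nondeg W, finrank_F2, hrank]
    omega
  rw [horth, LinearMap.BilinForm.mem_orthogonal_iff]
  intro x hx
  show Bf x u = 0
  rw [Bf_apply, omg_comm]
  exact hu x hx

end Stmt10Aux
namespace Stmt10Aux
open Matrix Module
variable {n : ℕ} {S T : Set (PM n)}

def Vsub (hS : IsStabilizerGroup n S) : Submodule (ZMod 2) (F2 n) where
  carrier := Vset S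
  add_mem' := fun ha hb => Vset_add hS ha hb
  zero_mem' := Vset_zero hS
  smul_mem' := by
    intro c v hv
    rcases zmod2_cases c with h | h <;> subst h
    · rw [zero_smul]; exact Vset_zero hS
    · rw [one_smul]; exact hv

lemma Vset_finite (hS : IsStabilizerGroup n S) : (Vset S).Finite :=
  Set.finite_of_ncard_ne_zero (by rw [Vset_ncard hS]; positivity)

lemma mem_Vset_of_comm (hT : IsStabilizerGroup n T) {u : F2 n}
    (hu : ∀ w ∈ Vset T, omg u w = 0) : u ∈ Vset T := by
  have hcard : Nat.card (Vsub hT) = 2 ^ n :=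
    (Nat.card_coe_set_eq (Vset T)).trans (Vset_ncard hT)
  exact max_isotropic (Vsub hT) hcard (fun v hv w hw => Vset_isotropic hT hv hw) hu

lemma omg_add_right (u v w : F2 n) : omg u (v + w) = omg u v + omg u w := by
  simp only [omg, Prod.fst_add, Prod.snd_add, dotProduct_add, add_dotProduct]
  ring

lemma halving (hT : IsStabilizerGroup n T) {u : F2 n} (hu : u ∉ Vset T) :
    {w | w ∈ Vset T ∧ omg u w = 1}.ncard = 2 ^ (n - 1) := by
  -- find v₀
  have hex : ∃ v₀ ∈ Vset T, omg u v₀ = 1 := by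
    by_contra hno
    push_neg at hno
    exact hu (mem_Vset_of_comm hT (fun w hw => by
      rcases zmod2_cases (omg u w) with h | h
      · exact h
      · exact absurd h (hno w hw)))
  obtain ⟨v₀, hv₀T, hv₀⟩ := hex
  set O := {w | w ∈ Vset T ∧ omg u w = 1} with hO
  set K := {w | w ∈ Vset T ∧ omg u w = 0} with hK
  have hOion : O ⊆ Vset T := fun w hw => hw.1
  have hKion : K ⊆ Vset T := fun w hw => hw.1
  have hfin := Vset_finite hT
  have hKO : K = (fun w => w + v₀) '' O := by
    ext k
    constructor
    · intro hk
      refine ⟨k + v₀, ⟨Vset_add hT hk.1 hv₀T, ?_⟩, ?_⟩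
      · rw [omg_add_right, hk.2, hv₀, zero_add]
      · show k + v₀ + v₀ = k
        rw [add_assoc, prod_add_self, add_zero]
    · rintro ⟨w, hw, rfl⟩
      refine ⟨Vset_add hT hw.1 hv₀T, ?_⟩
      rw [omg_add_right, hw.2, hv₀]
      decide
  have hinj : Function.Injective (fun w : F2 n => w + v₀) := fun a b h => by
    have := congrArg (fun x => x + v₀) h
    simpa [add_assoc, prod_add_self] using this
  have hcards : K.ncard = O.ncard := by
    rw [hKO, Set.ncard_image_of_injective _ hinj]
  have hunion : K ∪ O = Vset T := by
    ext w
    constructor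
    · rintro (h | h) <;> exact h.1
    · intro hw
      rcases zmod2_cases (omg u w) with h | h
      · exact Or.inl ⟨hw, h⟩
      · exact Or.inr ⟨hw, h⟩
  have hdisj : Disjoint K O := by
    rw [Set.disjoint_iff_forall_ne]
    rintro a ha b hb rfl
    have h0 : omg u a = 0 := ha.2
    have h1 : omg u a = 1 := hb.2
    rw [h0] at h1
    exact absurd h1 (by decide)
  have htot : K.ncard + O.ncard = 2 ^ n := by
    rw [← Set.ncard_union_eq hdisj (hfin.subset hKion) (hfin.subset hOion), hunion,
      Vset_ncard hT]
  rw [hcards] at htot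
  rcases n with _ | m
  · omega
  · have : (2:ℕ) ^ (m + 1) = 2 * 2 ^ m := by ring
    rw [this] at htot
    simpa using by omega

lemma degree (hS : IsStabilizerGroup n S) (hT : IsStabilizerGroup n T)
    {A : PM n} (hA : A ∈ S) (hAT : A ∉ T) (hAT' : -A ∉ T) :
    {B | (B ∈ T ∧ B ∉ S ∧ -B ∉ S) ∧ A * B = -(B * A)}.ncard = 2 ^ (n - 1) := by
  obtain ⟨c, hc, hc4, hAv⟩ := mem_decomp hS hA
  set u := strFn A
  have huS : u ∈ Vset S := ⟨c, hc, hAv ▸ hA⟩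
  have huT : u ∉ Vset T := by
    intro hmem
    rcases str_mem_Vset hT hc (sq_coeff hS hA hc hAv) hAv hmem with h | h
    exacts [hAT h, hAT' h]
  have hseteq : {B | (B ∈ T ∧ B ∉ S ∧ -B ∉ S) ∧ A * B = -(B * A)}
      = {B | B ∈ T ∧ omg u (strFn B) = 1} := by
    ext B
    constructor
    · rintro ⟨⟨hBT, _, _⟩, hanti⟩
      refine ⟨hBT, ?_⟩
      obtain ⟨d, hd, hd4, hBv⟩ := mem_decomp hT hBT
      rw [hAv, hBv] at hanti
      exact (anticomm_iff hc hd _ _).mp hanti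
    · rintro ⟨hBT, homg⟩
      obtain ⟨d, hd, hd4, hBv⟩ := mem_decomp hT hBT
      have hBS : strFn B ∉ Vset S := by
        intro hmem
        rw [Vset_isotropic hS huS hmem] at homg
        exact absurd homg (by decide)
      refine ⟨⟨hBT, ?_, ?_⟩, ?_⟩
      · intro hBSmem; exact hBS ⟨d, hd, hBv ▸ hBSmem⟩
      · intro hBSmem
        apply hBS
        refine ⟨-d, neg_ne_zero.mpr hd, ?_⟩
        have hneg : (-d) • matP (strFn B) = -B := by rw [neg_smul, ← hBv]
        rw [hneg]; exact hBSmem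
      · rw [hAv, hBv]; exact (anticomm_iff hc hd _ _).mpr homg
  rw [hseteq]
  have hinj : Set.InjOn strFn {B | B ∈ T ∧ omg u (strFn B) = 1} :=
    (str_injOn hT).mono (fun B hB => hB.1)
  have himg : strFn '' {B | B ∈ T ∧ omg u (strFn B) = 1} = {w | w ∈ Vset T ∧ omg u w = 1} := by
    ext w
    constructor
    · rintro ⟨B, ⟨hBT, homg⟩, rfl⟩
      obtain ⟨d, hd, _, hBv⟩ := mem_decomp hT hBT
      exact ⟨⟨d, hd, hBv ▸ hBT⟩, homg⟩
    · rintro ⟨⟨d, hd, hdm⟩, homg⟩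
      refine ⟨d • matP w, ⟨hdm, ?_⟩, strFn_eq hd rfl⟩
      rwa [strFn_eq hd rfl]
  rw [← Set.ncard_image_of_injOn hinj, himg, halving hT huT]

/-- elements of the symmetric difference on the `S` side map onto `Vset S \ Vset T` -/
lemma MS_image (hS : IsStabilizerGroup n S) (hT : IsStabilizerGroup n T) :
    strFn '' {A | A ∈ S ∧ A ∉ T ∧ -A ∉ T} = Vset S \ Vset T := by
  ext v
  constructor
  · rintro ⟨A, ⟨hA, hAT, hAT'⟩, rfl⟩
    obtain ⟨c, hc, _, hAv⟩ := mem_decomp hS hA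
    refine ⟨⟨c, hc, hAv ▸ hA⟩, ?_⟩
    intro hmem
    rcases str_mem_Vset hT hc (sq_coeff hS hA hc hAv) hAv hmem with h | h
    exacts [hAT h, hAT' h]
  · rintro ⟨⟨c, hc, hcm⟩, hvT⟩
    refine ⟨c • matP v, ⟨hcm, ?_, ?_⟩, strFn_eq hc rfl⟩
    · intro hmem; exact hvT ⟨c, hc, hmem⟩
    · intro hmem
      apply hvT
      refine ⟨-c, neg_ne_zero.mpr hc, ?_⟩
      rwa [neg_smul]

lemma MS_ncard_eq (hS : IsStabilizerGroup n S) (hT : IsStabilizerGroup n T) :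
    {A | A ∈ S ∧ A ∉ T ∧ -A ∉ T}.ncard = {A | A ∈ T ∧ A ∉ S ∧ -A ∉ S}.ncard := by
  have h1 : {A | A ∈ S ∧ A ∉ T ∧ -A ∉ T}.ncard = (Vset S \ Vset T).ncard := by
    rw [← MS_image hS hT]
    rw [Set.ncard_image_of_injOn ((str_injOn hS).mono (fun A hA => hA.1))]
  have h2 : {A | A ∈ T ∧ A ∉ S ∧ -A ∉ S}.ncard = (Vset T \ Vset S).ncard := by
    rw [← MS_image hT hS]
    rw [Set.ncard_image_of_injOn ((str_injOn hT).mono (fun A hA => hA.1))]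
  rw [h1, h2]
  have hfS := Vset_finite hS
  have hfT := Vset_finite hT
  have d1 : (Vset S \ Vset T).ncard + (Vset S ∩ Vset T).ncard = (Vset S).ncard := by
    rw [← Set.ncard_union_eq (Set.disjoint_of_subset_right Set.inter_subset_right
      Set.disjoint_sdiff_left) (hfS.subset Set.diff_subset)
      (hfS.subset Set.inter_subset_left), Set.diff_union_inter]
  have d2 : (Vset T \ Vset S).ncard + (Vset T ∩ Vset S).ncard = (Vset T).ncard := by
    rw [← Set.ncard_union_eq (Set.disjoint_of_subset_right Set.inter_subset_right
      Set.disjoint_sdiff_left) (hfT.subset Set.diff_subset)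
      (hfT.subset Set.inter_subset_left), Set.diff_union_inter]
  rw [Vset_ncard hS] at d1
  rw [Vset_ncard hT] at d2
  rw [Set.inter_comm] at d2
  omega

end Stmt10Aux
namespace Stmt10Aux

lemma card_filter_eq_sum {α : Type*} (s : Finset α) (p : α → Prop) [DecidablePred p] :
    (s.filter p).card = ∑ a ∈ s, if p a then 1 else 0 := by
  rw [Finset.card_filter]

lemma regular_matching {α : Type*} [DecidableEq α] (X Y : Finset α) (adj : α → α → Prop)
    [DecidableRel adj] {d : ℕ} (hd : 0 < d)
    (hX : ∀ a ∈ X, (Y.filter (fun b => adj a b)).card = d)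
    (hY : ∀ b ∈ Y, (X.filter (fun a => adj a b)).card = d) :
    ∃ f : {x // x ∈ X} → α, Function.Injective f ∧ (∀ a, f a ∈ Y ∧ adj a.1 (f a)) ∧
      ∀ b ∈ Y, ∃ a, f a = b := by
  classical
  set t : {x // x ∈ X} → Finset α := fun a => Y.filter (fun b => adj a.1 b) with ht
  have exchange : ∀ s : Finset {x // x ∈ X},
      ∑ a ∈ s, (t a).card = ∑ b ∈ Y, (s.filter (fun (a : {x // x ∈ X}) => adj a.1 b)).card := by
    intro s
    calc ∑ a ∈ s, (t a).card
        = ∑ a ∈ s, ∑ b ∈ Y, (if adj a.1 b then 1 else 0) := by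
          refine Finset.sum_congr rfl fun a _ => ?_
          rw [ht, card_filter_eq_sum]
      _ = ∑ b ∈ Y, ∑ a ∈ s, (if adj a.1 b then 1 else 0) := Finset.sum_comm
      _ = ∑ b ∈ Y, (s.filter (fun (a : {x // x ∈ X}) => adj a.1 b)).card := by
          refine Finset.sum_congr rfl fun b _ => ?_
          rw [card_filter_eq_sum]
  have degsum : ∀ s : Finset {x // x ∈ X}, ∑ a ∈ s, (t a).card = d * s.card := by
    intro s
    rw [Finset.sum_congr rfl fun a _ => hX a.1 a.2, Finset.sum_const, smul_eq_mul, mul_comm]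
  have filter_le : ∀ (s : Finset {x // x ∈ X}) (b : α), b ∈ Y →
      (s.filter (fun (a : {x // x ∈ X}) => adj a.1 b)).card ≤ d := by
    intro s b hbY
    rw [← hY b hbY]
    apply Finset.card_le_card_of_injOn (fun a => a.1)
    · intro a ha
      have := Finset.mem_filter.mp ha
      exact Finset.mem_filter.mpr ⟨a.2, this.2⟩
    · intro a _ a' _ h
      exact Subtype.ext h
  have hall : ∀ s : Finset {x // x ∈ X}, s.card ≤ (s.biUnion t).card := by
    intro s
    have h2 : ∑ b ∈ Y, (s.filter (fun (a : {x // x ∈ X}) => adj a.1 b)).card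
        = ∑ b ∈ s.biUnion t, (s.filter (fun (a : {x // x ∈ X}) => adj a.1 b)).card := by
      refine (Finset.sum_subset ?_ ?_).symm
      · intro b hb
        obtain ⟨a, _, hbt⟩ := Finset.mem_biUnion.mp hb
        exact (Finset.mem_filter.mp hbt).1
      · intro b hbY hbB
        rw [Finset.card_eq_zero, Finset.filter_eq_empty_iff]
        intro a ha hadj
        exact hbB (Finset.mem_biUnion.mpr ⟨a, ha, Finset.mem_filter.mpr ⟨hbY, hadj⟩⟩)
    have h4 : d * s.card ≤ d * (s.biUnion t).card := by
      calc d * s.card = ∑ a ∈ s, (t a).card := (degsum s).symm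
        _ = ∑ b ∈ Y, (s.filter (fun (a : {x // x ∈ X}) => adj a.1 b)).card := exchange s
        _ = ∑ b ∈ s.biUnion t, (s.filter (fun (a : {x // x ∈ X}) => adj a.1 b)).card := h2
        _ ≤ ∑ b ∈ s.biUnion t, d := Finset.sum_le_sum (fun b hb => by
            obtain ⟨a₀, _, hbt⟩ := Finset.mem_biUnion.mp hb
            exact filter_le s b (Finset.mem_filter.mp hbt).1)
        _ = (s.biUnion t).card * d := by rw [Finset.sum_const, smul_eq_mul]
        _ = d * (s.biUnion t).card := mul_comm _ _
    exact Nat.le_of_mul_le_mul_left h4 hd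
  obtain ⟨f, hfinj, hft⟩ := (Finset.all_card_le_biUnion_card_iff_exists_injective t).mp hall
  refine ⟨f, hfinj, fun a => ?_, ?_⟩
  · have := hft a
    rw [ht] at this
    exact Finset.mem_filter.mp this
  have hcardXY : X.card = Y.card := by
    have h1 := degsum (Finset.univ : Finset {x // x ∈ X})
    rw [Finset.card_univ, Fintype.card_coe] at h1
    have h2 : ∑ b ∈ Y, ((Finset.univ : Finset {x // x ∈ X}).filter
        (fun (a : {x // x ∈ X}) => adj a.1 b)).card = d * Y.card := by
      rw [Finset.sum_congr rfl (fun b hb => ?_), Finset.sum_const, smul_eq_mul, mul_comm]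
      rw [← hY b hb]
      apply Finset.card_bij (fun a _ => a.1)
      · intro a ha
        exact Finset.mem_filter.mpr ⟨a.2, (Finset.mem_filter.mp ha).2⟩
      · intro a _ a' _ h
        exact Subtype.ext h
      · intro b' hb'
        have := Finset.mem_filter.mp hb'
        exact ⟨⟨b', this.1⟩, Finset.mem_filter.mpr ⟨Finset.mem_univ _, this.2⟩, rfl⟩
    have h3 := exchange (Finset.univ : Finset {x // x ∈ X})
    rw [h1, h2] at h3
    exact Nat.eq_of_mul_eq_mul_left hd h3
  have himage : Finset.image f Finset.univ = Y := by
    apply Finset.eq_of_subset_of_card_le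
    · intro b hb
      obtain ⟨a, _, rfl⟩ := Finset.mem_image.mp hb
      exact (Finset.mem_filter.mp (hft a)).1
    · rw [Finset.card_image_of_injective _ hfinj, Finset.card_univ, Fintype.card_coe]
      exact hcardXY.ge
  intro b hb
  rw [← himage] at hb
  obtain ⟨a, _, ha⟩ := Finset.mem_image.mp hb
  exact ⟨a, ha⟩

end Stmt10Aux
namespace Stmt10Aux
variable {n : ℕ}

lemma anti_symm {A B : PM n} : (A * B = -(B * A)) ↔ (B * A = -(A * B)) :=
  ⟨fun h => by rw [h, neg_neg], fun h => by rw [h, neg_neg]⟩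

end Stmt10Aux



open Stmt10Aux in
theorem stmt10 {n : ℕ} (S T : Set (Matrix (Fin n → Fin 2) (Fin n → Fin 2) ℂ))
    (hS : IsStabilizerGroup n S) (hT : IsStabilizerGroup n T)
    (hne : ¬ (∀ A, (A ∈ S ∨ -A ∈ S) ↔ (A ∈ T ∨ -A ∈ T))) :
    ∃ P : Set (Set (Matrix (Fin n → Fin 2) (Fin n → Fin 2) ℂ)),
      (∀ p ∈ P, ∃ A B, A ≠ B ∧ p = {A, B} ∧ A * B = -(B * A)) ∧
      ⋃₀ P = symmDiffUpToSign n S T ∧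
      P.Pairwise Disjoint := by
  classical
  have hSfin : S.Finite := Set.finite_of_ncard_ne_zero (by rw [hS.2.2.2.2.1]; positivity)
  have hTfin : T.Finite := Set.finite_of_ncard_ne_zero (by rw [hT.2.2.2.2.1]; positivity)
  have hMSfin : {A : PM n | A ∈ S ∧ A ∉ T ∧ -A ∉ T}.Finite :=
    hSfin.subset (fun A hA => hA.1)
  have hMTfin : {A : PM n | A ∈ T ∧ A ∉ S ∧ -A ∉ S}.Finite :=
    hTfin.subset (fun A hA => hA.1)
  set X := hMSfin.toFinset with hXdef
  set Y := hMTfin.toFinset with hYdef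
  have hmemX : ∀ A, A ∈ X ↔ (A ∈ S ∧ A ∉ T ∧ -A ∉ T) := fun A => Set.Finite.mem_toFinset _
  have hmemY : ∀ A, A ∈ Y ↔ (A ∈ T ∧ A ∉ S ∧ -A ∉ S) := fun A => Set.Finite.mem_toFinset _
  have hX : ∀ A ∈ X, (Y.filter (fun B => A * B = -(B * A))).card = 2 ^ (n - 1) := by
    intro A hA
    rw [hmemX A] at hA
    rw [← degree hS hT hA.1 hA.2.1 hA.2.2, ← Set.ncard_coe_finset]
    congr 1
    ext B
    simp only [Finset.coe_filter, Set.mem_setOf_eq, hmemY B]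
  have hY : ∀ B ∈ Y, (X.filter (fun A => A * B = -(B * A))).card = 2 ^ (n - 1) := by
    intro B hB
    rw [hmemY B] at hB
    rw [← degree hT hS hB.1 hB.2.1 hB.2.2, ← Set.ncard_coe_finset]
    congr 1
    ext A
    simp only [Finset.coe_filter, Set.mem_setOf_eq, hmemX A]
    constructor
    · rintro ⟨h1, h2⟩; exact ⟨h1, anti_symm.mp h2⟩
    · rintro ⟨h1, h2⟩; exact ⟨h1, anti_symm.mpr h2⟩
  obtain ⟨f, hfinj, hfY, hfsurj⟩ := regular_matching X Y (fun A B => A * B = -(B * A))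
    (d := 2 ^ (n - 1)) (by positivity) hX hY
  have memMS : ∀ a : {x // x ∈ X}, (a.1 ∈ S ∧ a.1 ∉ T ∧ -a.1 ∉ T) := fun a => (hmemX a.1).mp a.2
  have memMT : ∀ a : {x // x ∈ X}, (f a ∈ T ∧ f a ∉ S ∧ -(f a) ∉ S) :=
    fun a => (hmemY (f a)).mp (hfY a).1
  have hne' : ∀ a : {x // x ∈ X}, a.1 ≠ f a := by
    intro a h
    exact (memMT a).2.1 (h ▸ (memMS a).1)
  have hneMSMT : ∀ (a a' : {x // x ∈ X}), a.1 ≠ f a' := by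
    intro a a' h
    exact (memMT a').2.1 (h ▸ (memMS a).1)
  refine ⟨Set.range (fun a : {x // x ∈ X} => ({a.1, f a} : Set (PM n))), ?_, ?_, ?_⟩
  · rintro p ⟨a, rfl⟩
    exact ⟨a.1, f a, hne' a, rfl, (hfY a).2⟩
  · ext C
    constructor
    · rintro ⟨p, ⟨a, rfl⟩, hC⟩
      rcases hC with h | h
      · exact Or.inl (h ▸ memMS a)
      · rw [Set.mem_singleton_iff] at h
        exact Or.inr (h ▸ memMT a)
    · rintro (h | h)
      · refine ⟨{(⟨C, (hmemX C).mpr h⟩ : {x // x ∈ X}).1,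
          f ⟨C, (hmemX C).mpr h⟩}, ⟨⟨C, (hmemX C).mpr h⟩, rfl⟩, Or.inl rfl⟩
      · obtain ⟨a, ha⟩ := hfsurj C ((hmemY C).mpr h)
        exact ⟨{a.1, f a}, ⟨a, rfl⟩, Or.inr (by rw [Set.mem_singleton_iff, ha])⟩
  · rintro p ⟨a, rfl⟩ q ⟨a', rfl⟩ hpq
    have haa : a ≠ a' := fun h => hpq (by rw [h])
    rw [Set.disjoint_iff_forall_ne]
    rintro u hu v hv rfl
    simp only [Set.mem_insert_iff, Set.mem_singleton_iff] at hu hv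
    rcases hu with h1 | h1 <;> rcases hv with h2 | h2
    · exact haa (Subtype.ext (by rw [← h1, h2]))
    · exact hneMSMT a a' (by rw [← h1, h2])
    · exact hneMSMT a' a (by rw [← h2, h1])
    · exact haa (hfinj (by rw [← h1, h2]))
end
end

section
/- Let 𝓐₁, …, 𝓐_L be stabilizer bases of ℂ^{2^n}, with basis vectors 𝓐_k = {|a_i^{(k)}⟩}_i, and let r = max over k ≠ ℓ and all i, j of |⟨a_i^{(k)}|a_j^{(ℓ)}⟩| be the maximal overlap of basis states from different bases. Then for every density operator ρ, (1/L) Σ_{k=1}^L S^{min}(𝓐_k|ρ) ≥ −log₂[(1 + r(L−1))/L]. -/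
/-!
STATEMENT 13: Let 𝓐₁,…,𝓐_L be stabilizer bases of ℂ^{2^n} and let
r = max_{k≠ℓ} max_{i,j} |⟨a_i^{(k)}|a_j^{(ℓ)}⟩| be the maximal overlap of basis states
from different bases.  Then for every density operator ρ,
(1/L) Σ_k S^{min}(𝓐_k|ρ) ≥ −log₂[(1 + r(L−1))/L],
where S^{min}(𝓐|ρ) = −log₂ (max_i ⟨a_i|ρ|a_i⟩).
-/

open scoped ComplexOrder

noncomputable section

open scoped InnerProductSpace

/-- Identity map viewing a function as a vector in Euclidean space. -/
abbrev toE {d : Type*} [Fintype d] (w : d → ℂ) : EuclideanSpace ℂ d := WithLp.toLp 2 w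

lemma qinner_eq_inner {d : Type*} [Fintype d] (u w : d → ℂ) :
    qinner u w = ⟪toE u, toE w⟫_ℂ := by
  simp [qinner, PiLp.inner_apply, RCLike.inner_apply, toE]
  exact Finset.sum_congr rfl fun _ _ => mul_comm _ _

lemma norm_sq_eq_sum {d : Type*} [Fintype d] (w : d → ℂ) :
    ‖toE w‖ ^ 2 = ∑ x, ‖w x‖ ^ 2 := by
  have h : qinner w w = ((∑ x, ‖w x‖ ^ 2 : ℝ) : ℂ) := by
    rw [qinner]
    push_cast
    exact Finset.sum_congr rfl fun x _ => by rw [RCLike.conj_mul]; norm_cast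
  have h2 := qinner_eq_inner w w
  rw [h] at h2
  have h3 := @inner_self_eq_norm_sq ℂ (EuclideanSpace ℂ d) _ _ _ (toE w)
  rw [← h2] at h3
  exact h3.symm.trans (by norm_cast)

lemma key_vec {d : Type*} [Fintype d] {L : ℕ} (hL : 1 ≤ L)
    (u : Fin L → EuclideanSpace ℂ d) (hu : ∀ k, ‖u k‖ = 1)
    (r : ℝ) (hr0 : 0 ≤ r)
    (hru : ∀ k l, k ≠ l → ‖(⟪u k, u l⟫_ℂ)‖ ≤ r)
    (ψ : EuclideanSpace ℂ d) :
    ∑ k, ‖(⟪u k, ψ⟫_ℂ)‖ ^ 2 ≤ (1 + r * ((L : ℝ) - 1)) * ‖ψ‖ ^ 2 := by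
  classical
  set c : Fin L → ℂ := fun k => ⟪u k, ψ⟫_ℂ with hc
  have hck : ∀ k, ⟪u k, ψ⟫_ℂ = c k := fun _ => rfl
  simp only [hck]
  have hT0 : (0:ℝ) ≤ ∑ k, ‖c k‖ ^ 2 := Finset.sum_nonneg fun _ _ => sq_nonneg _
  have hLR : (1:ℝ) ≤ (L:ℝ) := by exact_mod_cast hL
  have hC1 : (1:ℝ) ≤ 1 + r * ((L:ℝ) - 1) := by nlinarith
  set φ : EuclideanSpace ℂ d := ∑ k, c k • u k with hφ
  have h1 : ⟪φ, ψ⟫_ℂ = ((∑ k, ‖c k‖ ^ 2 : ℝ) : ℂ) := by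
    rw [hφ, sum_inner]
    push_cast
    refine Finset.sum_congr rfl fun k _ => ?_
    rw [inner_smul_left, hck, RCLike.conj_mul]
    norm_cast
  have h2 : ∑ k, ‖c k‖ ^ 2 ≤ ‖φ‖ * ‖ψ‖ := by
    have h' : ‖(⟪φ, ψ⟫_ℂ)‖ = ∑ k, ‖c k‖ ^ 2 := by
      rw [h1, Complex.norm_real, Real.norm_eq_abs]; exact abs_of_nonneg hT0
    rw [← h']; exact norm_inner_le_norm _ _
  have hphi : ‖φ‖ ^ 2 ≤
      ∑ k, ∑ l, (if k = l then ‖c k‖ * ‖c l‖ else r * (‖c k‖ * ‖c l‖)) := by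
    have e1 : ⟪φ, φ⟫_ℂ = ∑ k, ∑ l, (starRingEnd ℂ) (c k) * (c l * ⟪u k, u l⟫_ℂ) := by
      rw [hφ, sum_inner]
      refine Finset.sum_congr rfl fun k _ => ?_
      rw [inner_smul_left, inner_sum, Finset.mul_sum]
      exact Finset.sum_congr rfl fun l _ => by rw [inner_smul_right]
    have e2 : ‖φ‖ ^ 2 = RCLike.re (⟪φ, φ⟫_ℂ) := (inner_self_eq_norm_sq _).symm
    rw [e2, e1]
    calc RCLike.re (∑ k, ∑ l, (starRingEnd ℂ) (c k) * (c l * ⟪u k, u l⟫_ℂ))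
        ≤ ‖∑ k, ∑ l, (starRingEnd ℂ) (c k) * (c l * ⟪u k, u l⟫_ℂ)‖ :=
          RCLike.re_le_norm _
      _ ≤ ∑ k, ∑ l, ‖(starRingEnd ℂ) (c k) * (c l * ⟪u k, u l⟫_ℂ)‖ :=
          (norm_sum_le _ _).trans (Finset.sum_le_sum fun k _ => norm_sum_le _ _)
      _ ≤ ∑ k, ∑ l, (if k = l then ‖c k‖ * ‖c l‖ else r * (‖c k‖ * ‖c l‖)) := by
          refine Finset.sum_le_sum fun k _ => Finset.sum_le_sum fun l _ => ?_
          rw [norm_mul, norm_mul, RCLike.norm_conj]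
          split_ifs with hkl
          · subst hkl
            have hnn : ‖(⟪u k, u k⟫_ℂ)‖ = 1 := by
              rw [@inner_self_eq_norm_sq_to_K ℂ, hu k]
              norm_num
            rw [hnn, mul_one]
          · have h' : ‖c l‖ * ‖(⟪u k, u l⟫_ℂ)‖ ≤ ‖c l‖ * r :=
              mul_le_mul_of_nonneg_left (hru k l hkl) (norm_nonneg _)
            calc ‖c k‖ * (‖c l‖ * ‖(⟪u k, u l⟫_ℂ)‖) ≤ ‖c k‖ * (‖c l‖ * r) :=
                  mul_le_mul_of_nonneg_left h' (norm_nonneg _)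
              _ = r * (‖c k‖ * ‖c l‖) := by ring
  have hrow : ∀ k, (∑ l, if k = l then ‖c k‖ * ‖c l‖ else r * (‖c k‖ * ‖c l‖))
      = r * (‖c k‖ * ∑ l, ‖c l‖) + (1 - r) * ‖c k‖ ^ 2 := by
    intro k
    have e : ∀ l, (if k = l then ‖c k‖ * ‖c l‖ else r * (‖c k‖ * ‖c l‖))
        = r * (‖c k‖ * ‖c l‖) + (if k = l then (1 - r) * (‖c k‖ * ‖c l‖) else 0) := by
      intro l; split_ifs with h <;> ring
    rw [Finset.sum_congr rfl fun l _ => e l, Finset.sum_add_distrib, Finset.sum_ite_eq]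
    simp only [Finset.mem_univ, if_pos]
    rw [← Finset.mul_sum, ← Finset.mul_sum]
    ring
  have hsum : (∑ k, ∑ l, if k = l then ‖c k‖ * ‖c l‖ else r * (‖c k‖ * ‖c l‖))
      = r * (∑ k, ‖c k‖) ^ 2 + (1 - r) * ∑ k, ‖c k‖ ^ 2 := by
    rw [Finset.sum_congr rfl fun k _ => hrow k, Finset.sum_add_distrib,
      ← Finset.mul_sum, ← Finset.sum_mul, ← Finset.mul_sum]
    ring
  have hCS : (∑ k, ‖c k‖) ^ 2 ≤ (L : ℝ) * ∑ k, ‖c k‖ ^ 2 := by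
    simpa using sq_sum_le_card_mul_sum_sq (s := Finset.univ)
      (f := fun k : Fin L => ‖c k‖)
  have hphib : ‖φ‖ ^ 2 ≤ (1 + r * ((L:ℝ) - 1)) * ∑ k, ‖c k‖ ^ 2 := by
    have hrS : r * (∑ k, ‖c k‖) ^ 2 ≤ r * ((L:ℝ) * ∑ k, ‖c k‖ ^ 2) :=
      mul_le_mul_of_nonneg_left hCS hr0
    nlinarith [hphi, hsum]
  rcases eq_or_lt_of_le hT0 with h0 | h0
  · rw [← h0]
    nlinarith [sq_nonneg ‖ψ‖]
  · have hTsq : (∑ k, ‖c k‖ ^ 2) ^ 2 ≤ (‖φ‖ * ‖ψ‖) ^ 2 :=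
      pow_le_pow_left₀ hT0 h2 2
    nlinarith [sq_nonneg ‖ψ‖, sq_nonneg ‖φ‖, hphib, hTsq]

lemma parseval {d : Type*} [Fintype d] [DecidableEq d] [Nonempty d]
    (w : d → d → ℂ) (hw : OrthonormalFamily w) (x : d → ℂ) :
    ∑ i, ‖qinner (w i) x‖ ^ 2 = ∑ y, ‖x y‖ ^ 2 := by
  have hON : Orthonormal ℂ (fun i => toE (w i)) := by
    rw [orthonormal_iff_ite]
    intro i j
    rw [← qinner_eq_inner]
    exact hw i j
  have hcard : Fintype.card d = Module.finrank ℂ (EuclideanSpace ℂ d) :=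
    finrank_euclideanSpace.symm
  let b0 := basisOfLinearIndependentOfCardEqFinrank hON.linearIndependent hcard
  have hb0 : ⇑b0 = fun i => toE (w i) :=
    coe_basisOfLinearIndependentOfCardEqFinrank _ _
  let b : OrthonormalBasis d ℂ (EuclideanSpace ℂ d) := b0.toOrthonormalBasis (by rwa [hb0])
  have hb : ⇑b = fun i => toE (w i) := by
    rw [Module.Basis.coe_toOrthonormalBasis, hb0]
  have h := b.sum_inner_mul_inner (toE x) (toE x)
  have h2 : ∀ i, (⟪toE x, b i⟫_ℂ) * ⟪b i, toE x⟫_ℂ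
      = ((‖qinner (w i) x‖ ^ 2 : ℝ) : ℂ) := by
    intro i
    have hbi : b i = toE (w i) := by rw [hb]
    rw [hbi, ← inner_conj_symm (toE x) (toE (w i)), RCLike.conj_mul, ← qinner_eq_inner]
    norm_cast
  rw [Finset.sum_congr rfl fun i _ => h2 i, @inner_self_eq_norm_sq_to_K ℂ] at h
  have h3 : (∑ i, ‖qinner (w i) x‖ ^ 2 : ℝ) = ‖toE x‖ ^ 2 := by
    have hre := congrArg Complex.re h
    simpa [← Complex.ofReal_pow, Complex.re_sum] using hre
  rw [h3, norm_sq_eq_sum]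

lemma qinner_norm_comm {d : Type*} [Fintype d] (u w : d → ℂ) :
    ‖qinner u w‖ = ‖qinner w u‖ := by
  rw [qinner_eq_inner, qinner_eq_inner]
  exact norm_inner_symm _ _

lemma qinner_conj_row {d m : Type*} [Fintype d] [Fintype m] (B : Matrix m d ℂ)
    (i : m) (u : d → ℂ) :
    qinner (fun x => (starRingEnd ℂ) (B i x)) u = B.mulVec u i := by
  simp [qinner, Matrix.mulVec, dotProduct]

open Matrix in
lemma prob_eq_sum {d m : Type*} [Fintype d] [Fintype m] (B : Matrix m d ℂ) (u : d → ℂ) :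
    prob u (Bᴴ * B) = ∑ i, ‖qinner (fun x => (starRingEnd ℂ) (B i x)) u‖ ^ 2 := by
  have e : qinner u ((Bᴴ * B).mulVec u)
      = ∑ i, (starRingEnd ℂ) (B.mulVec u i) * (B.mulVec u i) := by
    rw [← Matrix.mulVec_mulVec]
    simp only [qinner, Matrix.mulVec, dotProduct, Matrix.conjTranspose_apply,
      Finset.mul_sum, map_sum, _root_.map_mul, Finset.sum_mul]
    rw [Finset.sum_comm]
    refine Finset.sum_congr rfl fun i _ => ?_
    rw [Finset.sum_comm]
    refine Finset.sum_congr rfl fun x _ => Finset.sum_congr rfl fun y _ => ?_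
    simp only [_root_.map_mul, ← starRingEnd_apply]
    ring
  rw [prob, e, Complex.re_sum]
  refine Finset.sum_congr rfl fun i _ => ?_
  rw [qinner_conj_row, RCLike.conj_mul]
  simp [← Complex.ofReal_pow]

open Matrix in
lemma trace_eq_sum {d m : Type*} [Fintype d] [Fintype m] (B : Matrix m d ℂ) :
    (Bᴴ * B).trace = ((∑ i, ∑ x, ‖B i x‖ ^ 2 : ℝ) : ℂ) := by
  simp only [Matrix.trace, Matrix.diag, Matrix.mul_apply, Matrix.conjTranspose_apply]
  rw [Finset.sum_comm]
  push_cast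
  refine Finset.sum_congr rfl fun i _ => Finset.sum_congr rfl fun x _ => ?_
  rw [← starRingEnd_apply, RCLike.conj_mul]
  norm_cast


theorem stmt13 {n L : ℕ}
    (v : Fin L → (Fin n → Fin 2) → (Fin n → Fin 2) → ℂ)
    (hv : ∀ k, IsStabilizerBasis n (v k))
    (r : ℝ)
    (hr : IsGreatest {x : ℝ | ∃ k l i j, k ≠ l ∧
        x = ‖qinner (v k i) (v l j)‖} r)
    (ρ : Matrix (Fin n → Fin 2) (Fin n → Fin 2) ℂ)
    (hρ : ρ.PosSemidef) (htr : ρ.trace = 1) :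
    (L : ℝ)⁻¹ * ∑ k, (- Real.logb 2 (⨆ i, prob (v k i) ρ))
      ≥ - Real.logb 2 ((1 + r * ((L : ℝ) - 1)) / L) := by
  classical
  have hONF : ∀ k, OrthonormalFamily (v k) := fun k => ((hv k).choose_spec).2.1
  obtain ⟨⟨k0, l0, i0, j0, hk0, hreq⟩, hub⟩ := hr
  have hr0 : 0 ≤ r := by rw [hreq]; exact norm_nonneg _
  have hL : 1 ≤ L := Nat.one_le_iff_ne_zero.mpr (by rintro rfl; exact k0.elim0)
  have hLR : (1:ℝ) ≤ (L:ℝ) := by exact_mod_cast hL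
  have hLpos : (0:ℝ) < L := by linarith
  obtain ⟨B, hB⟩ : ∃ B : Matrix (Fin n → Fin 2) (Fin n → Fin 2) ℂ, ρ = B.conjTranspose * B := by
    open scoped MatrixOrder in
    obtain ⟨B, hB⟩ := CStarAlgebra.nonneg_iff_eq_star_mul_self.mp hρ.nonneg
    exact ⟨B, hB⟩
  have hunit : ∀ k i, ‖toE (v k i)‖ = 1 := by
    intro k i
    have h1 : qinner (v k i) (v k i) = 1 := by simpa using hONF k i i
    rw [qinner_eq_inner] at h1
    have h2 : RCLike.re (⟪toE (v k i), toE (v k i)⟫_ℂ) = 1 := by rw [h1]; simp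
    rw [inner_self_eq_norm_sq] at h2
    nlinarith [norm_nonneg (toE (v k i))]
  have hprob : ∀ u : (Fin n → Fin 2) → ℂ, prob u ρ
      = ∑ m', ‖qinner (fun x => (starRingEnd ℂ) (B m' x)) u‖ ^ 2 := by
    intro u; rw [hB]; exact prob_eq_sum B u
  have htrace : (∑ m', ∑ x, ‖B m' x‖ ^ 2 : ℝ) = 1 := by
    have h := htr
    rw [hB, trace_eq_sum] at h
    exact_mod_cast h
  have hwnorm : ∀ m', (∑ x, ‖(starRingEnd ℂ) (B m' x)‖ ^ 2 : ℝ) = ∑ x, ‖B m' x‖ ^ 2 :=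
    fun m' => Finset.sum_congr rfl fun x _ => by simp
  have hsum_basis : ∀ k, ∑ i, prob (v k i) ρ = 1 := by
    intro k
    calc ∑ i, prob (v k i) ρ
        = ∑ i, ∑ m', ‖qinner (fun x => (starRingEnd ℂ) (B m' x)) (v k i)‖ ^ 2 :=
          Finset.sum_congr rfl fun i _ => hprob _
      _ = ∑ m', ∑ i, ‖qinner (v k i) (fun x => (starRingEnd ℂ) (B m' x))‖ ^ 2 := by
          rw [Finset.sum_comm]
          exact Finset.sum_congr rfl fun m' _ => Finset.sum_congr rfl fun i _ => by
            rw [qinner_norm_comm]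
      _ = ∑ m', ∑ x, ‖(starRingEnd ℂ) (B m' x)‖ ^ 2 :=
          Finset.sum_congr rfl fun m' _ => parseval (v k) (hONF k) _
      _ = 1 := by rw [Finset.sum_congr rfl fun m' _ => hwnorm m']; exact htrace
  have hmax : ∀ k, ∃ i, (∀ j, prob (v k j) ρ ≤ prob (v k i) ρ) ∧
      (⨆ i, prob (v k i) ρ) = prob (v k i) ρ := by
    intro k
    obtain ⟨i, hi⟩ := Finite.exists_max (fun i => prob (v k i) ρ)
    exact ⟨i, hi, le_antisymm (ciSup_le hi) (le_ciSup (f := fun i => prob (v k i) ρ) (Set.finite_range _).bddAbove i)⟩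
  have hppos : ∀ k, 0 < (⨆ i, prob (v k i) ρ) := by
    intro k
    obtain ⟨i, hi, hpe⟩ := hmax k
    rw [hpe]
    by_contra hcon
    push_neg at hcon
    have hall : ∀ j, prob (v k j) ρ ≤ 0 := fun j => (hi j).trans hcon
    have hs := Finset.sum_nonpos (fun j (_ : j ∈ Finset.univ) => hall j)
    rw [hsum_basis k] at hs
    linarith
  have hsump : ∑ k, (⨆ i, prob (v k i) ρ) ≤ 1 + r * ((L:ℝ) - 1) := by
    choose ik hik hpe using hmax
    have step : ∀ m', ∑ k, ‖qinner (v k (ik k)) (fun x => (starRingEnd ℂ) (B m' x))‖ ^ 2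
        ≤ (1 + r * ((L:ℝ) - 1)) * ∑ x, ‖B m' x‖ ^ 2 := by
      intro m'
      have hover : ∀ k l : Fin L, k ≠ l →
          ‖(⟪toE (v k (ik k)), toE (v l (ik l))⟫_ℂ)‖ ≤ r := by
        intro k l hkl
        rw [← qinner_eq_inner]
        have hmem := hub ⟨k, l, ik k, ik l, hkl, rfl⟩
        exact hmem
      have hkv := key_vec hL (fun k => toE (v k (ik k))) (fun k => hunit k (ik k))
        r hr0 hover (toE (fun x => (starRingEnd ℂ) (B m' x)))
      rw [norm_sq_eq_sum] at hkv
      calc ∑ k, ‖qinner (v k (ik k)) (fun x => (starRingEnd ℂ) (B m' x))‖ ^ 2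
          = ∑ k, ‖(⟪toE (v k (ik k)), toE (fun x => (starRingEnd ℂ) (B m' x))⟫_ℂ)‖ ^ 2 :=
            Finset.sum_congr rfl fun k _ => by rw [qinner_eq_inner]
        _ ≤ (1 + r * ((L:ℝ) - 1)) * ∑ x, ‖(starRingEnd ℂ) (B m' x)‖ ^ 2 := hkv
        _ = (1 + r * ((L:ℝ) - 1)) * ∑ x, ‖B m' x‖ ^ 2 := by rw [hwnorm m']
    calc ∑ k, (⨆ i, prob (v k i) ρ) = ∑ k, prob (v k (ik k)) ρ :=
          Finset.sum_congr rfl fun k _ => hpe k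
      _ = ∑ k, ∑ m', ‖qinner (fun x => (starRingEnd ℂ) (B m' x)) (v k (ik k))‖ ^ 2 :=
          Finset.sum_congr rfl fun k _ => hprob _
      _ = ∑ m', ∑ k, ‖qinner (v k (ik k)) (fun x => (starRingEnd ℂ) (B m' x))‖ ^ 2 := by
          rw [Finset.sum_comm]
          exact Finset.sum_congr rfl fun m' _ => Finset.sum_congr rfl fun k _ => by
            rw [qinner_norm_comm]
      _ ≤ ∑ m', (1 + r * ((L:ℝ) - 1)) * ∑ x, ‖B m' x‖ ^ 2 :=
          Finset.sum_le_sum fun m' _ => step m'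
      _ = (1 + r * ((L:ℝ) - 1)) * ∑ m', ∑ x, ‖B m' x‖ ^ 2 := by rw [← Finset.mul_sum]
      _ = 1 + r * ((L:ℝ) - 1) := by rw [htrace, mul_one]
  set C : ℝ := 1 + r * ((L:ℝ) - 1) with hC
  have hCpos : (0:ℝ) < C := by rw [hC]; nlinarith
  have hjensen : ∑ k, (L:ℝ)⁻¹ • Real.log ((⨆ i, prob (v k i) ρ)) ≤
      Real.log (∑ k, (L:ℝ)⁻¹ • (⨆ i, prob (v k i) ρ)) := by
    refine (strictConcaveOn_log_Ioi.concaveOn).le_map_sum (fun _ _ => by positivity)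
      ?_ (fun k _ => hppos k)
    rw [Finset.sum_const, Finset.card_univ, Fintype.card_fin, nsmul_eq_mul]
    field_simp
  have havg : ∑ k, (L:ℝ)⁻¹ • (⨆ i, prob (v k i) ρ) ≤ C / L := by
    simp only [smul_eq_mul]
    rw [← Finset.mul_sum]
    calc (L:ℝ)⁻¹ * ∑ k, (⨆ i, prob (v k i) ρ) ≤ (L:ℝ)⁻¹ * C :=
          mul_le_mul_of_nonneg_left hsump (by positivity)
      _ = C / L := by rw [inv_mul_eq_div]
  have havgpos : 0 < ∑ k, (L:ℝ)⁻¹ • (⨆ i, prob (v k i) ρ) := by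
    have hne : Nonempty (Fin L) := ⟨⟨0, hL⟩⟩
    refine Finset.sum_pos (fun k _ => ?_) Finset.univ_nonempty
    simp only [smul_eq_mul]
    exact mul_pos (by positivity) (hppos k)
  have hlog : ∑ k, (L:ℝ)⁻¹ * Real.log (⨆ i, prob (v k i) ρ) ≤ Real.log (C / L) := by
    refine le_trans ?_ ((Real.log_le_log havgpos havg))
    simpa [smul_eq_mul] using hjensen
  have hlog2 : (0:ℝ) < Real.log 2 := Real.log_pos (by norm_num)
  rw [ge_iff_le]
  have hneg : -Real.log (C / L) ≤ (L:ℝ)⁻¹ * ∑ k, -Real.log (⨆ i, prob (v k i) ρ) := by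
    have he : (L:ℝ)⁻¹ * ∑ k, -Real.log (⨆ i, prob (v k i) ρ)
        = -(∑ k, (L:ℝ)⁻¹ * Real.log (⨆ i, prob (v k i) ρ)) := by
      rw [Finset.mul_sum, ← Finset.sum_neg_distrib]
      exact Finset.sum_congr rfl fun k _ => by ring
    rw [he]
    linarith
  simp only [Real.logb]
  calc -(Real.log (C / L) / Real.log 2)
      = -Real.log (C / L) / Real.log 2 := by ring
    _ ≤ ((L:ℝ)⁻¹ * ∑ k, -Real.log (⨆ i, prob (v k i) ρ)) / Real.log 2 :=
        (div_le_div_iff_of_pos_right hlog2).mpr hneg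
    _ = (L:ℝ)⁻¹ * ∑ k, -(Real.log (⨆ i, prob (v k i) ρ) / Real.log 2) := by
        rw [mul_div_assoc, Finset.sum_div]
        congr 1
        exact Finset.sum_congr rfl fun k _ => by ring
end
end
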